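/- arXiv:2009.10124 — 4 statements merged into one kernel-verified Lean document; each statement's English description precedes it below -/
import Mathlib

section
/- Local approximation in operator norm from an on-site Lieb–Robinson bound (Lemma 1 of the Supplement). Fix t ∈ ℝ and suppose there are constants c₁, c₂ > 0 such that for all sites i, i' ∈ Λ and all unitaries U supported on {i} and U' supported on {i'}, ‖[e^{−iHt} U e^{iHt}, U']‖ ≤ c₁ e^{c₂|t|} (d(i,i')+1)^{−α}. Then for any X ⊆ Λ, any integer r ≥ 1, and any operator W_X supported on X with ‖W_X‖ ≤ 1, one has ‖W_X(t) − W_X(t, X[r])‖ ≤ 2 c₁ e^{c₂|t|} Σ_{i∈X[r]^c} Σ_{i'∈X} (d(i,i')+1)^{−α}. -/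
open scoped Classical ENNReal Matrix ComplexOrder
open Complex

noncomputable section

/-- Spin configurations of a lattice `Λ` of (1/2)-spins. -/
abbrev SpinConf (Λ : Type) := Λ → Fin 2

/-- Operators on the Hilbert space `⨂_{i∈Λ} ℂ²`, realized as complex matrices
indexed by spin configurations. -/
abbrev SpinOp (Λ : Type) [Fintype Λ] [DecidableEq Λ] := Matrix (SpinConf Λ) (SpinConf Λ) ℂ

section GeneralMatrices

variable {n : Type} [Fintype n] [DecidableEq n]

/-- The operator norm `‖·‖` (largest singular value). -/
noncomputable def opNorm (A : Matrix n n ℂ) : ℝ :=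
  ‖Matrix.toEuclideanCLM (𝕜 := ℂ) A‖

/-- The normalized Frobenius norm `‖O‖_F := √(tr(O†O)/tr(1̂))`. -/
noncomputable def frobNorm (A : Matrix n n ℂ) : ℝ :=
  Real.sqrt ((Aᴴ * A).trace.re / (Fintype.card n))

/-- The Schatten `p`-norm; for `p = ∞` it is the operator norm, otherwise it is the
`ℓ^p` norm of the singular values. -/
noncomputable def schattenNorm (p : ℝ≥0∞) (A : Matrix n n ℂ) : ℝ :=
  if p = ⊤ then opNorm A
  else (∑ i, Real.sqrt ((Matrix.posSemidef_conjTranspose_mul_self A).1.eigenvalues i)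
      ^ p.toReal) ^ (1 / p.toReal)

/-- The commutator `[A,B] := AB - BA`. -/
def commM (A B : Matrix n n ℂ) : Matrix n n ℂ := A * B - B * A

/-- `U` is a unitary matrix. -/
def IsUnitaryM (U : Matrix n n ℂ) : Prop := Uᴴ * U = 1 ∧ U * Uᴴ = 1

/-- Heisenberg time evolution `O(t) := e^{iHt} O e^{-iHt}`. -/
noncomputable def timeEv (H : Matrix n n ℂ) (t : ℝ) (A : Matrix n n ℂ) : Matrix n n ℂ :=
  NormedSpace.exp ((Complex.I * (t : ℂ)) • H) * A *
    NormedSpace.exp ((-(Complex.I * (t : ℂ))) • H)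

end GeneralMatrices

variable {Λ : Type} [Fintype Λ] [DecidableEq Λ]

/-- `A = A_X ⊗ 1_{X^c}`: the matrix entries vanish unless the configurations agree
outside `X`, and depend only on the configurations inside `X`. -/
def IsSupportedOn (A : SpinOp Λ) (X : Finset Λ) : Prop :=
  (∀ a b : SpinConf Λ, (∃ i ∉ X, a i ≠ b i) → A a b = 0) ∧
  (∀ a b a' b' : SpinConf Λ, (∀ i ∈ X, a i = a' i) → (∀ i ∈ X, b i = b' i) →
    (∀ i ∉ X, a i = b i) → (∀ i ∉ X, a' i = b' i) → A a b = A a' b')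

/-- The localization `(tr_{X^c}[A]/tr_{X^c}(1̂)) ⊗ 1_{X^c}` of an operator `A`
onto the subset `X` (normalized partial trace over `X^c` tensored with identity). -/
noncomputable def localize (A : SpinOp Λ) (X : Finset Λ) : SpinOp Λ := fun a b =>
  (if ∀ i ∉ X, a i = b i then (1 : ℂ) else 0) *
    (∑ c : SpinConf Λ,
      A (fun i => if i ∈ X then a i else c i) (fun i => if i ∈ X then b i else c i))
    / (2 ^ Fintype.card Λ)

/-- `d` is a metric taking nonnegative integer values. -/
def IsLatticeMetric (d : Λ → Λ → ℕ) : Prop :=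
  (∀ i j, d i j = d j i) ∧ (∀ i j, d i j = 0 ↔ i = j) ∧
    (∀ i j l, d i l ≤ d i j + d j l)

/-- The ball `i[r] := {j : d(i,j) ≤ r}`. -/
def ball (d : Λ → Λ → ℕ) (i : Λ) (r : ℕ) : Finset Λ :=
  Finset.univ.filter (fun j => d i j ≤ r)

/-- The extended set `X[r] := ⋃_{i∈X} i[r]`. -/
def extend (d : Λ → Λ → ℕ) (X : Finset Λ) (r : ℕ) : Finset Λ :=
  Finset.univ.filter (fun j => ∃ i ∈ X, d i j ≤ r)

/-- The distance from a site to a (nonempty) finite set of sites. -/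
noncomputable def distSet (d : Λ → Λ → ℕ) (i : Λ) (S : Finset Λ) : ℕ :=
  sInf {m : ℕ | ∃ j ∈ S, d i j = m}

/-- The inner boundary `∂X := {i ∈ X : d(i,X^c) = 1}`. -/
noncomputable def bdry (d : Λ → Λ → ℕ) (X : Finset Λ) : Finset Λ :=
  X.filter (fun i => distSet d i Xᶜ = 1)

/-- The layer `(∂X)_s`: the sites of `X` at distance `-s` from `∂X` when `s ≤ 0`,
and the sites of `X^c` at distance `s` from `∂X` when `s > 0`. -/
noncomputable def layer (d : Λ → Λ → ℕ) (X : Finset Λ) (s : ℤ) : Finset Λ :=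
  if s ≤ 0 then X.filter (fun i => (distSet d i (bdry d X) : ℤ) = -s)
  else Xᶜ.filter (fun i => (distSet d i (bdry d X) : ℤ) = s)

/-- The four single-site Pauli matrices `σ⁰ = 1, σˣ, σʸ, σᶻ`. -/
def pauli : Fin 4 → Matrix (Fin 2) (Fin 2) ℂ :=
  ![1, !![0, 1; 1, 0], !![0, -Complex.I; Complex.I, 0], !![1, 0; 0, -1]]

/-- A Pauli string `⨂_{i∈Λ} σ^{p(i)}`. -/
noncomputable def pauliString (p : Λ → Fin 4) : SpinOp Λ :=
  fun a b => ∏ i, pauli (p i) (a i) (b i)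

/-- The Pauli expansion coefficient `tr(P_p A)/2^{|Λ|}` of `A` at the string `p`. -/
noncomputable def pauliCoeff (A : SpinOp Λ) (p : Λ → Fin 4) : ℂ :=
  (pauliString p * A).trace / (2 ^ Fintype.card Λ)

/-- `J := 3^{k/2} J₀`. -/
noncomputable def Jconst (k : ℕ) (J₀ : ℝ) : ℝ := Real.sqrt 3 ^ k * J₀

/-- `g̃ := max(gk, λJ)` with `J = 3^{k/2} J₀`. -/
noncomputable def gTilde (k : ℕ) (J₀ g lam : ℝ) : ℝ := max (g * k) (lam * Jconst k J₀)

/-- `C₀ := 2^{α-D/2+2} J₀ γ/(2α-D-1) + (80 g̃ γ 2^{α-D/2}/(α-D)) √(2α-2D+γ)`. -/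
noncomputable def C0 (α J₀ γ : ℝ) (D : ℕ) (gt : ℝ) : ℝ :=
  (2 : ℝ) ^ (α - (D : ℝ) / 2 + 2) * J₀ * γ / (2 * α - (D : ℝ) - 1) +
    (80 * gt * γ * (2 : ℝ) ^ (α - (D : ℝ) / 2) / (α - (D : ℝ))) *
      Real.sqrt (2 * α - 2 * (D : ℝ) + γ)

end


/-! Conjugating by the Pauli strings supported in `Yᶜ` and averaging gives exactly the
localization onto `Y`, so `‖A - A(Y)‖` is bounded by the average of `‖[A, P]‖`, and the Leibniz
rule for commutators bounds `‖[A, P]‖` by `∑_{i ∈ Yᶜ} max_μ ‖[A, σ_i^μ]‖`. For `A = W(t)` and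
`Y = X[r]`, unitarity of `e^{iHt}` gives `‖[W(t), σ_i^μ]‖ = ‖[W, σ_i^μ(-t)]‖`; as `W` commutes with
the localization of `σ_i^μ(-t)` onto `Xᶜ`, this is at most `2 ‖σ_i^μ(-t) - σ_i^μ(-t, Xᶜ)‖`, which
the same twirling bound and the on-site Lieb–Robinson bound control by
`2 ∑_{i' ∈ X} c₁ e^{c₂|t|} (d(i,i') + 1)^{-α}`. -/

section OperatorNorm

variable {n : Type} [Fintype n] [DecidableEq n]

lemma opNorm_nonneg (A : Matrix n n ℂ) : 0 ≤ opNorm A := norm_nonneg _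

lemma opNorm_mul_le (A B : Matrix n n ℂ) : opNorm (A * B) ≤ opNorm A * opNorm B := by
  simpa only [opNorm, map_mul] using norm_mul_le _ _

lemma opNorm_add_le (A B : Matrix n n ℂ) : opNorm (A + B) ≤ opNorm A + opNorm B := by
  simpa only [opNorm, map_add] using norm_add_le _ _

lemma opNorm_sub_le (A B : Matrix n n ℂ) : opNorm (A - B) ≤ opNorm A + opNorm B := by
  simpa only [opNorm, map_sub] using norm_sub_le _ _

lemma opNorm_smul (c : ℂ) (A : Matrix n n ℂ) : opNorm (c • A) = ‖c‖ * opNorm A := by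
  simp only [opNorm, map_smul, norm_smul]

lemma opNorm_sum_le {ι : Type*} (s : Finset ι) (f : ι → Matrix n n ℂ) :
    opNorm (∑ i ∈ s, f i) ≤ ∑ i ∈ s, opNorm (f i) := by
  simpa only [opNorm, map_sum] using norm_sum_le _ _

lemma opNorm_unitary_mul {U : Matrix n n ℂ} (hU : U ∈ unitary (Matrix n n ℂ))
    (A : Matrix n n ℂ) : opNorm (U * A) = opNorm A := by
  simpa only [opNorm, map_mul] using
    CStarRing.norm_mem_unitary_mul _ (Unitary.map_mem Matrix.toEuclideanCLM hU)

lemma opNorm_mul_unitary {U : Matrix n n ℂ} (hU : U ∈ unitary (Matrix n n ℂ))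
    (A : Matrix n n ℂ) : opNorm (A * U) = opNorm A := by
  simpa only [opNorm, map_mul] using
    CStarRing.norm_mul_mem_unitary _ (Unitary.map_mem Matrix.toEuclideanCLM hU)

end OperatorNorm


section TimeEvolution

variable {n : Type} {H : Matrix n n ℂ}

lemma Matrix.IsHermitian.conjTranspose_I_mul_smul (hH : H.IsHermitian) (t : ℝ) :
    ((Complex.I * (t : ℂ)) • H)ᴴ = -((Complex.I * (t : ℂ)) • H) := by
  rw [Matrix.conjTranspose_smul, hH.eq, ← neg_smul]
  simp

variable [Fintype n] [DecidableEq n]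

lemma Matrix.exp_mem_unitary_of_conjTranspose_eq_neg {X : Matrix n n ℂ} (hX : Xᴴ = -X) :
    NormedSpace.exp X ∈ unitary (Matrix n n ℂ) := by
  rw [Unitary.mem_iff, Matrix.star_eq_conjTranspose, ← Matrix.exp_conjTranspose, hX,
    ← Matrix.exp_add_of_commute _ _ (Commute.refl X).neg_left,
    ← Matrix.exp_add_of_commute _ _ (Commute.refl X).neg_right,
    neg_add_cancel, add_neg_cancel, NormedSpace.exp_zero, and_self]

lemma star_exp_I_mul_smul (hH : H.IsHermitian) (t : ℝ) :
    star (NormedSpace.exp ((Complex.I * (t : ℂ)) • H)) =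
      NormedSpace.exp ((-(Complex.I * (t : ℂ))) • H) := by
  rw [Matrix.star_eq_conjTranspose, ← Matrix.exp_conjTranspose, hH.conjTranspose_I_mul_smul,
    neg_smul]

lemma timeEv_neg (H : Matrix n n ℂ) (t : ℝ) (A : Matrix n n ℂ) :
    timeEv H (-t) A = NormedSpace.exp ((-(Complex.I * (t : ℂ))) • H) * A *
      NormedSpace.exp ((Complex.I * (t : ℂ)) • H) := by
  simp only [timeEv, Complex.ofReal_neg, mul_neg, neg_neg]

lemma commM_conj_unitary {u : Matrix n n ℂ} (hu : u ∈ unitary (Matrix n n ℂ)) (A B : Matrix n n ℂ) :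
    commM (u * A * star u) B = u * commM A (star u * B * u) * star u := by
  have hcancel : ∀ X, u * (star u * X) = X := fun X => by
    rw [← mul_assoc, Unitary.mul_star_self_of_mem hu, one_mul]
  simp only [commM, mul_sub, sub_mul, mul_assoc, Unitary.mul_star_self_of_mem hu, mul_one, hcancel]

lemma opNorm_commM_timeEv (hH : H.IsHermitian) (t : ℝ) (A B : Matrix n n ℂ) :
    opNorm (commM (timeEv H t A) B) = opNorm (commM A (timeEv H (-t) B)) := by
  have hu := Matrix.exp_mem_unitary_of_conjTranspose_eq_neg (hH.conjTranspose_I_mul_smul t)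
  rw [timeEv, timeEv_neg, ← star_exp_I_mul_smul hH, commM_conj_unitary hu,
    opNorm_mul_unitary (Unitary.star_mem hu), opNorm_unitary_mul hu]

end TimeEvolution

section Support

variable {Λ : Type} [Fintype Λ] [DecidableEq Λ]

lemma IsSupportedOn.mul_apply {W L : SpinOp Λ} {X : Finset Λ} (hW : IsSupportedOn W X)
    (hL : IsSupportedOn L Xᶜ) (a b : SpinConf Λ) :
    (W * L) a b = W a (X.piecewise b a) * L (X.piecewise b a) b := by
  rw [Matrix.mul_apply, Finset.sum_eq_single (X.piecewise b a) _ (by simp)]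
  intro c _ hc
  obtain ⟨i, hi⟩ := Function.ne_iff.mp hc
  by_cases hiX : i ∈ X
  · rw [hL.1 c b ⟨i, by simpa using hiX, by simpa [hiX] using hi⟩, mul_zero]
  · rw [hW.1 a c ⟨i, hiX, by simpa [hiX, eq_comm] using hi⟩, zero_mul]

lemma IsSupportedOn.commute_of_compl {W L : SpinOp Λ} {X : Finset Λ} (hW : IsSupportedOn W X)
    (hL : IsSupportedOn L Xᶜ) : Commute W L := by
  ext a b
  rw [hW.mul_apply hL, hL.mul_apply (by rwa [compl_compl]), Finset.piecewise_compl, mul_comm]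
  congr 1
  · refine hL.2 _ _ _ _ ?_ ?_ ?_ ?_ <;> intro i hi <;> simp_all
  · refine hW.2 _ _ _ _ ?_ ?_ ?_ ?_ <;> intro i hi <;> simp_all

lemma isSupportedOn_localize (A : SpinOp Λ) (Y : Finset Λ) : IsSupportedOn (localize A Y) Y := by
  constructor
  · rintro a b ⟨i, hi, hne⟩
    have : ¬ ∀ j ∉ Y, a j = b j := fun h => hne (h i hi)
    simp [localize, this]
  · intro a b a' b' ha hb hab ha'b'
    simp only [localize, if_pos hab, if_pos ha'b']
    congr 3
    funext c
    congr 1 <;> funext i <;> by_cases hi : i ∈ Y <;> simp [hi, ha, hb]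

end Support

section Pauli

variable {Λ : Type} [Fintype Λ] [DecidableEq Λ]

def tensorOp (f : Λ → Matrix (Fin 2) (Fin 2) ℂ) : SpinOp Λ := fun a b => ∏ i, f i (a i) (b i)

lemma tensorOp_mul (f g : Λ → Matrix (Fin 2) (Fin 2) ℂ) :
    tensorOp f * tensorOp g = tensorOp (f * g) := by
  ext a b
  simp only [tensorOp, Matrix.mul_apply, Pi.mul_apply, Fintype.prod_sum, Finset.prod_mul_distrib]

lemma tensorOp_one : tensorOp (1 : Λ → Matrix (Fin 2) (Fin 2) ℂ) = 1 := by
  ext a b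
  simp only [tensorOp, Pi.one_apply, Matrix.one_apply, Fintype.prod_boole, funext_iff]

lemma conjTranspose_tensorOp (f : Λ → Matrix (Fin 2) (Fin 2) ℂ) :
    (tensorOp f)ᴴ = tensorOp fun i => (f i)ᴴ := by
  ext a b
  simp [tensorOp, Matrix.conjTranspose_apply]

lemma isSupportedOn_tensorOp {f : Λ → Matrix (Fin 2) (Fin 2) ℂ} {s : Finset Λ}
    (hf : ∀ i ∉ s, f i = 1) : IsSupportedOn (tensorOp f) s := by
  constructor
  · rintro a b ⟨i, hi, hne⟩
    exact Finset.prod_eq_zero (Finset.mem_univ i) (by simp [hf i hi, hne])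
  · intro a b a' b' ha hb hab ha'b'
    refine Finset.prod_congr rfl fun i _ => ?_
    by_cases hi : i ∈ s
    · rw [ha i hi, hb i hi]
    · simp [hf i hi, hab i hi, ha'b' i hi]

lemma pauli_conjTranspose (μ : Fin 4) : (pauli μ)ᴴ = pauli μ := by
  fin_cases μ <;> ext a b <;> fin_cases a <;> fin_cases b <;> simp [pauli]

lemma pauli_mul_self (μ : Fin 4) : pauli μ * pauli μ = 1 := by
  fin_cases μ <;> ext a b <;> fin_cases a <;> fin_cases b <;>
    simp [pauli, Matrix.mul_apply, Fin.sum_univ_two, Matrix.one_apply]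

/-- Completeness of the Pauli basis: `∑_μ σ^μ ⊗ σ^μ` is twice the swap operator. -/
lemma sum_pauli_mul_pauli (a b x y : Fin 2) :
    ∑ μ : Fin 4, pauli μ a x * pauli μ y b
      = 2 * (if a = b then 1 else 0) * (if x = y then 1 else 0) := by
  fin_cases a <;> fin_cases b <;> fin_cases x <;> fin_cases y <;>
    simp [pauli, Fin.sum_univ_four] <;> ring

lemma pauliString_eq_tensorOp (p : Λ → Fin 4) : pauliString p = tensorOp (pauli ∘ p) := rfl

lemma pauliString_mul_self (p : Λ → Fin 4) : pauliString p * pauliString p = 1 := by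
  rw [pauliString_eq_tensorOp, tensorOp_mul, ← tensorOp_one]
  exact congrArg tensorOp (funext fun i => pauli_mul_self (p i))

lemma pauliString_mem_unitary (p : Λ → Fin 4) : pauliString p ∈ unitary (SpinOp Λ) := by
  have hstar : star (pauliString p) = pauliString p := by
    rw [Matrix.star_eq_conjTranspose, pauliString_eq_tensorOp, conjTranspose_tensorOp]
    exact congrArg tensorOp (funext fun i => pauli_conjTranspose (p i))
  rw [Unitary.mem_iff, hstar, and_self, pauliString_mul_self]

lemma pauliString_eq_update_mul_single (p : Λ → Fin 4) (j : Λ) :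
    pauliString p = pauliString (Function.update p j 0) * pauliString (Pi.single j (p j)) := by
  rw [pauliString_eq_tensorOp, pauliString_eq_tensorOp, pauliString_eq_tensorOp, tensorOp_mul]
  congr 1
  funext i
  by_cases h : i = j
  · subst h; simp [pauli]
  · simp [h, pauli]

lemma isSupportedOn_pauliString_single (i : Λ) (μ : Fin 4) :
    IsSupportedOn (pauliString (Pi.single i μ)) {i} :=
  isSupportedOn_tensorOp fun j hj => by simp [Finset.mem_singleton.not.mp hj, pauli]

end Pauli

section Twirl

variable {Λ : Type} [Fintype Λ]

open scoped Finset

lemma boole_eq_prod_boole (f g : SpinConf Λ) :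
    (if f = g then (1 : ℂ) else 0) = ∏ i, if f i = g i then 1 else 0 := by
  simp only [Fintype.prod_boole, funext_iff]

variable [DecidableEq Λ]

def pauliStringsSupportedIn (s : Finset Λ) : Finset (Λ → Fin 4) :=
  Fintype.piFinset fun i => if i ∈ s then Finset.univ else {0}

lemma mem_pauliStringsSupportedIn {s : Finset Λ} {p : Λ → Fin 4} :
    p ∈ pauliStringsSupportedIn s ↔ ∀ i ∉ s, p i = 0 := by
  simp only [pauliStringsSupportedIn, Fintype.mem_piFinset]
  refine forall_congr' fun i => ?_
  by_cases hi : i ∈ s <;> simp [hi]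

lemma card_pauliStringsSupportedIn (s : Finset Λ) : #(pauliStringsSupportedIn s) = 4 ^ #s := by
  simp [pauliStringsSupportedIn, apply_ite Finset.card]

lemma sum_pauliString_apply_mul_apply (s : Finset Λ) (a b c c' : SpinConf Λ) :
    ∑ p ∈ pauliStringsSupportedIn s, pauliString p a c * pauliString p c' b =
      ∏ i, if i ∈ s then 2 * (if a i = b i then 1 else 0) * (if c i = c' i then 1 else 0)
        else (if a i = c i then 1 else 0) * (if c' i = b i then 1 else 0) := by
  simp_rw [pauliString, ← Finset.prod_mul_distrib]
  rw [pauliStringsSupportedIn,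
    ← Finset.prod_univ_sum (f := fun i μ => pauli μ (a i) (c i) * pauli μ (c' i) (b i))]
  refine Finset.prod_congr rfl fun i _ => ?_
  by_cases hi : i ∈ s
  · simp only [hi, if_true, sum_pauli_mul_pauli]
  · simp [hi, pauli, Matrix.one_apply]

lemma sum_apply_ite_mem_eq_sum_kernel (Y : Finset Λ) (F : SpinConf Λ → SpinConf Λ → ℂ)
    (a b : SpinConf Λ) :
    ∑ e : SpinConf Λ,
        F (fun i => if i ∈ Y then a i else e i) (fun i => if i ∈ Y then b i else e i) =
      ∑ c, ∑ c', F c c' * ∏ i, if i ∈ Y then 2 * (if c i = a i then 1 else 0) *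
        (if c' i = b i then 1 else 0) else (if c i = c' i then 1 else 0) := by
  have hF : ∀ f g : SpinConf Λ, F f g =
      ∑ c, ∑ c', F c c' * ((if c = f then 1 else 0) * (if c' = g then 1 else 0)) := by
    intro f g
    simp [mul_ite, Finset.sum_ite_eq']
  simp_rw [Finset.sum_congr rfl fun e _ => hF _ _, boole_eq_prod_boole, ← Finset.prod_mul_distrib]
  rw [Finset.sum_comm]
  refine Finset.sum_congr rfl fun c _ => ?_
  rw [Finset.sum_comm]
  refine Finset.sum_congr rfl fun c' _ => ?_
  rw [← Finset.mul_sum, ← Fintype.prod_sum (fun i x => (if c i = (if i ∈ Y then a i else x) then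
    (1 : ℂ) else 0) * (if c' i = (if i ∈ Y then b i else x) then 1 else 0))]
  congr 1
  refine Finset.prod_congr rfl fun i _ => ?_
  by_cases hi : i ∈ Y <;> simp [hi]

lemma prod_pauli_kernel_eq_prod_partialTrace_kernel (Y : Finset Λ) (a b c c' : SpinConf Λ) :
    (∏ i, if i ∈ Yᶜ then 2 * (if a i = b i then 1 else 0) * (if c i = c' i then 1 else 0)
        else (if a i = c i then 1 else 0) * (if c' i = b i then (1 : ℂ) else 0)) =
      4 ^ #Yᶜ * (if ∀ i ∉ Y, a i = b i then 1 else 0) * (∏ i, if i ∈ Y then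
        2 * (if c i = a i then 1 else 0) * (if c' i = b i then 1 else 0)
        else (if c i = c' i then 1 else 0)) / 2 ^ Fintype.card Λ := by
  rw [eq_div_iff (by positivity)]
  have hsite : ∀ i, (if i ∈ Yᶜ then 2 * (if a i = b i then 1 else 0) * (if c i = c' i then 1 else 0)
        else (if a i = c i then 1 else 0) * (if c' i = b i then (1 : ℂ) else 0)) * 2 =
      (if i ∈ Yᶜ then 4 * (if a i = b i then 1 else 0) else 1) * (if i ∈ Y then
        2 * (if c i = a i then 1 else 0) * (if c' i = b i then 1 else 0)
        else (if c i = c' i then 1 else 0)) := by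
    intro i
    by_cases hi : i ∈ Y
    · simp only [Finset.mem_compl, hi, not_true_eq_false, if_false, if_true, eq_comm (a := a i)]
      ring
    · simp only [Finset.mem_compl, hi, not_false_eq_true, if_false, if_true]
      ring
  rw [← Finset.card_univ, ← Finset.prod_const, ← Finset.prod_mul_distrib,
    Finset.prod_congr rfl fun i _ => hsite i, Finset.prod_mul_distrib, Fintype.prod_ite_mem,
    Finset.prod_mul_distrib, Finset.prod_const, Finset.prod_boole]
  simp [Finset.mem_compl]

theorem sum_pauliString_conj (A : SpinOp Λ) (Y : Finset Λ) :
    ∑ p ∈ pauliStringsSupportedIn Yᶜ, pauliString p * A * pauliString p =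
      (4 : ℂ) ^ #Yᶜ • localize A Y := by
  ext a b
  have hentry : (∑ p ∈ pauliStringsSupportedIn Yᶜ, pauliString p * A * pauliString p) a b =
      ∑ c, ∑ c', A c c' *
        ∑ p ∈ pauliStringsSupportedIn Yᶜ, pauliString p a c * pauliString p c' b := by
    simp only [Matrix.sum_apply, Matrix.mul_apply, Finset.sum_mul, Finset.mul_sum]
    refine (Finset.sum_congr rfl fun p _ => Finset.sum_comm).trans ?_
    rw [Finset.sum_comm]
    refine Finset.sum_congr rfl fun c _ => ?_
    rw [Finset.sum_comm]
    exact Finset.sum_congr rfl fun c' _ => Finset.sum_congr rfl fun p _ => by ring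
  rw [hentry, Matrix.smul_apply, localize, sum_apply_ite_mem_eq_sum_kernel Y A a b, smul_eq_mul]
  simp_rw [sum_pauliString_apply_mul_apply, prod_pauli_kernel_eq_prod_partialTrace_kernel,
    Finset.mul_sum, Finset.sum_div, Finset.mul_sum]
  exact Finset.sum_congr rfl fun c _ => Finset.sum_congr rfl fun c' _ => by ring

end Twirl

section CommutatorBounds

variable {n : Type} [Fintype n] [DecidableEq n]

lemma commM_mul_right (A B C : Matrix n n ℂ) : commM A (B * C) = commM A B * C + B * commM A C := by
  simp only [commM]
  noncomm_ring

lemma opNorm_commM_mul_le (A : Matrix n n ℂ) {U V : Matrix n n ℂ} (hU : U ∈ unitary (Matrix n n ℂ))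
    (hV : V ∈ unitary (Matrix n n ℂ)) :
    opNorm (commM A (U * V)) ≤ opNorm (commM A U) + opNorm (commM A V) := by
  rw [commM_mul_right, ← opNorm_mul_unitary hV (commM A U), ← opNorm_unitary_mul hU (commM A V)]
  exact opNorm_add_le _ _

lemma opNorm_commM_le_of_commute {W L : Matrix n n ℂ} (hWL : Commute W L) (B : Matrix n n ℂ) :
    opNorm (commM W B) ≤ 2 * opNorm W * opNorm (B - L) := by
  have hsplit : commM W B = W * (B - L) - (B - L) * W := by
    rw [commM, mul_sub, sub_mul, hWL.eq]
    abel
  calc opNorm (commM W B) ≤ opNorm W * opNorm (B - L) + opNorm (B - L) * opNorm W := by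
        rw [hsplit]
        exact (opNorm_sub_le _ _).trans (add_le_add (opNorm_mul_le _ _) (opNorm_mul_le _ _))
    _ = 2 * opNorm W * opNorm (B - L) := by ring

end CommutatorBounds

section Localization

variable {Λ : Type} [Fintype Λ] [DecidableEq Λ]

open scoped Finset

lemma opNorm_commM_pauliString_le (A : SpinOp Λ) (h : Λ → ℝ) (s : Finset Λ)
    (hA : ∀ i ∈ s, ∀ μ, opNorm (commM A (pauliString (Pi.single i μ))) ≤ h i)
    (p : Λ → Fin 4) (hp : ∀ i ∉ s, p i = 0) :
    opNorm (commM A (pauliString p)) ≤ ∑ i ∈ s, h i := by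
  induction s using Finset.induction_on generalizing p with
  | empty =>
    have hp0 : pauliString p = 1 := by
      rw [funext fun i => hp i (Finset.notMem_empty i), pauliString_eq_tensorOp, ← tensorOp_one]
      rfl
    simp [hp0, commM, opNorm]
  | insert j s hj ih =>
    rw [pauliString_eq_update_mul_single p j, Finset.sum_insert hj, add_comm]
    refine (opNorm_commM_mul_le A (pauliString_mem_unitary _) (pauliString_mem_unitary _)).trans
      (add_le_add (ih (fun i hi => hA i (Finset.mem_insert_of_mem hi)) _ fun i hi => ?_)
        (hA j (Finset.mem_insert_self j s) _))
    by_cases hij : i = j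
    · simp [hij]
    · simp [hij, hp i (by simp [hij, hi])]

theorem opNorm_sub_localize_le (A : SpinOp Λ) (Y : Finset Λ) (h : Λ → ℝ)
    (hA : ∀ i ∉ Y, ∀ μ, opNorm (commM A (pauliString (Pi.single i μ))) ≤ h i) :
    opNorm (A - localize A Y) ≤ ∑ i ∈ Yᶜ, h i := by
  have htwirl : (4 : ℂ) ^ #Yᶜ • (A - localize A Y) =
      ∑ p ∈ pauliStringsSupportedIn Yᶜ, commM A (pauliString p) * pauliString p := by
    have hterm : ∀ p, commM A (pauliString p) * pauliString p =
        A - pauliString p * A * pauliString p := fun p => by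
      rw [commM, sub_mul, mul_assoc A, pauliString_mul_self, mul_one]
    rw [Finset.sum_congr rfl fun p _ => hterm p, Finset.sum_sub_distrib, sum_pauliString_conj,
      Finset.sum_const, card_pauliStringsSupportedIn, smul_sub, ← Nat.cast_smul_eq_nsmul ℂ]
    push_cast
    rfl
  have hbound : (4 : ℝ) ^ #Yᶜ * opNorm (A - localize A Y) ≤ 4 ^ #Yᶜ * ∑ i ∈ Yᶜ, h i := by
    calc (4 : ℝ) ^ #Yᶜ * opNorm (A - localize A Y)
        = opNorm ((4 : ℂ) ^ #Yᶜ • (A - localize A Y)) := by rw [opNorm_smul]; norm_num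
      _ ≤ ∑ p ∈ pauliStringsSupportedIn Yᶜ, opNorm (commM A (pauliString p) * pauliString p) := by
        rw [htwirl]; exact opNorm_sum_le _ _
      _ ≤ ∑ p ∈ pauliStringsSupportedIn Yᶜ, ∑ i ∈ Yᶜ, h i := by
        refine Finset.sum_le_sum fun p hp => ?_
        rw [opNorm_mul_unitary (pauliString_mem_unitary p)]
        exact opNorm_commM_pauliString_le A h Yᶜ (fun i hi => hA i (Finset.mem_compl.mp hi)) p
          (mem_pauliStringsSupportedIn.mp hp)
      _ = 4 ^ #Yᶜ * ∑ i ∈ Yᶜ, h i := by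
        rw [Finset.sum_const, card_pauliStringsSupportedIn, nsmul_eq_mul]
        push_cast
        rfl
  exact le_of_mul_le_mul_left hbound (by positivity)

end Localization

theorem local_approximation_from_onsite_LR_general
    {Λ : Type} [Fintype Λ] [DecidableEq Λ] (d : Λ → Λ → ℕ)
    (α : ℝ)
    (H : SpinOp Λ) (hH : H.IsHermitian) (t : ℝ)
    (c₁ c₂ : ℝ)
    (hLR : ∀ (i i' : Λ) (U U' : SpinOp Λ),
      IsUnitaryM U → IsSupportedOn U {i} → IsUnitaryM U' → IsSupportedOn U' {i'} →
      opNorm (commM (timeEv H (-t) U) U')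
        ≤ c₁ * Real.exp (c₂ * |t|) * ((d i i' : ℝ) + 1) ^ (-α))
    (X : Finset Λ) (r : ℕ)
    (W : SpinOp Λ) (hWs : IsSupportedOn W X) (hWn : opNorm W ≤ 1) :
    opNorm (timeEv H t W - localize (timeEv H t W) (extend d X r))
      ≤ 2 * c₁ * Real.exp (c₂ * |t|) *
          ∑ i ∈ (extend d X r)ᶜ, ∑ i' ∈ X, ((d i i' : ℝ) + 1) ^ (-α) := by
  set K := c₁ * Real.exp (c₂ * |t|)
  have hsite : ∀ i ∉ extend d X r, ∀ μ,
      opNorm (commM (timeEv H t W) (pauliString (Pi.single i μ))) ≤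
        2 * K * ∑ i' ∈ X, ((d i i' : ℝ) + 1) ^ (-α) := by
    intro i _ μ
    set B := timeEv H (-t) (pauliString (Pi.single i μ))
    have hB : opNorm (B - localize B Xᶜ) ≤ ∑ i' ∈ X, K * ((d i i' : ℝ) + 1) ^ (-α) := by
      simpa using opNorm_sub_localize_le B Xᶜ _ fun i' _ ν =>
        hLR i i' _ _ (pauliString_mem_unitary _) (isSupportedOn_pauliString_single i μ)
          (pauliString_mem_unitary _) (isSupportedOn_pauliString_single i' ν)
    calc opNorm (commM (timeEv H t W) (pauliString (Pi.single i μ)))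
        = opNorm (commM W B) := opNorm_commM_timeEv hH t _ _
      _ ≤ 2 * opNorm W * opNorm (B - localize B Xᶜ) :=
        opNorm_commM_le_of_commute (hWs.commute_of_compl (isSupportedOn_localize B Xᶜ)) B
      _ ≤ 2 * 1 * ∑ i' ∈ X, K * ((d i i' : ℝ) + 1) ^ (-α) := by
        gcongr
        exact opNorm_nonneg _
      _ = 2 * K * ∑ i' ∈ X, ((d i i' : ℝ) + 1) ^ (-α) := by rw [← Finset.mul_sum]; ring
  calc _ ≤ ∑ i ∈ (extend d X r)ᶜ, 2 * K * ∑ i' ∈ X, ((d i i' : ℝ) + 1) ^ (-α) :=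
        opNorm_sub_localize_le _ _ _ hsite
    _ = _ := by rw [Finset.mul_sum, mul_assoc]

/-- **Local approximation in operator norm from an on-site Lieb–Robinson bound**
(Lemma 1 of the Supplement). -/
theorem local_approximation_from_onsite_LR
    {Λ : Type} [Fintype Λ] [DecidableEq Λ] (d : Λ → Λ → ℕ)
    (hmet : IsLatticeMetric d) (α : ℝ) (hα : 0 < α)
    (H : SpinOp Λ) (hH : H.IsHermitian) (t : ℝ)
    (c₁ c₂ : ℝ) (hc₁ : 0 < c₁) (hc₂ : 0 < c₂)
    (hLR : ∀ (i i' : Λ) (U U' : SpinOp Λ),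
      IsUnitaryM U → IsSupportedOn U {i} → IsUnitaryM U' → IsSupportedOn U' {i'} →
      opNorm (commM (timeEv H (-t) U) U')
        ≤ c₁ * Real.exp (c₂ * |t|) * ((d i i' : ℝ) + 1) ^ (-α))
    (X : Finset Λ) (r : ℕ) (hr : 1 ≤ r)
    (W : SpinOp Λ) (hWs : IsSupportedOn W X) (hWn : opNorm W ≤ 1) :
    opNorm (timeEv H t W - localize (timeEv H t W) (extend d X r))
      ≤ 2 * c₁ * Real.exp (c₂ * |t|) *
          ∑ i ∈ (extend d X r)ᶜ, ∑ i' ∈ X, ((d i i' : ℝ) + 1) ^ (-α) :=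
  local_approximation_from_onsite_LR_general d α H hH t c₁ c₂ hLR X r W hWs hWn
end

section
/- Integrated Lieb–Robinson differential inequality in the Frobenius norm. Let W_X be an operator supported on X ⊆ Λ, let B be any operator, and let H_X := Σ_{Z : Z∩X ≠ ∅} h_Z. Then for every t ≥ 0, ‖[W_X(t), B]‖_F ≤ ‖[W_X, B]‖_F + 2‖W_X‖ ∫₀^t ‖[H_X(s), B]‖_F ds. -/
open scoped Classical ENNReal Matrix ComplexOrder
open Complex

/-!
Let `H'` collect the terms `h_Z` with `Z ∩ X = ∅`, so that `H = H_X + H'` and `W_X` commutes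
with `H'`. The interaction-picture propagator `V(s) = e^{isH} e^{-isH'}` is unitary and satisfies
`W_X(t) = V(t) W_X V(t)†`, hence `‖[W_X(t), B]‖_F = ‖[W_X, V(t)† B V(t)]‖_F` by unitary invariance.
Since `V' = i H_X(s) V`, the derivative of `V(s)† B V(s)` is `-i V(s)† [H_X(s), B] V(s)`, whose
Frobenius norm is `‖[H_X(s), B]‖_F`. Integrating, and using `‖[W, M]‖_F ≤ 2 ‖W‖ ‖M‖_F`, gives the
bound.
-/

lemma lie_conj_unitary {R : Type*} [Ring R] [StarRing R] {V : R} (hV : V ∈ unitary R) (W B : R) :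
    ⁅V * W * star V, B⁆ = V * ⁅W, star V * B * V⁆ * star V := by
  have cancel : ∀ x, V * (star V * x) = x := fun x => by
    rw [← mul_assoc, Unitary.mul_star_self_of_mem hV, one_mul]
  simp only [Ring.lie_def, mul_sub, sub_mul, mul_assoc, Unitary.mul_star_self_of_mem hV, mul_one,
    cancel]

section Propagator

variable {𝔸 : Type*} [NormedRing 𝔸] [NormedAlgebra ℂ 𝔸]

noncomputable def propagator (H : 𝔸) (s : ℝ) : 𝔸 := NormedSpace.exp ((I * s) • H)

noncomputable def interactionPropagator (H K : 𝔸) (s : ℝ) : 𝔸 :=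
  propagator H s * propagator (-K) s

lemma propagator_eq_exp_smul (H : 𝔸) :
    propagator H = fun s : ℝ => NormedSpace.exp (s • (I • H)) := by
  ext s
  rw [propagator, ← smul_assoc, real_smul, mul_comm]

@[simp] lemma propagator_zero (H : 𝔸) : propagator H 0 = 1 := by
  simp [propagator]

@[simp] lemma interactionPropagator_zero (H K : 𝔸) : interactionPropagator H K 0 = 1 := by
  simp [interactionPropagator]

lemma Commute.propagator_right {W H : 𝔸} (h : Commute W H) (s : ℝ) :
    Commute W (propagator H s) :=
  (h.smul_right _).exp_right

section Star

variable [StarRing 𝔸] [ContinuousStar 𝔸] [StarModule ℂ 𝔸]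

lemma star_propagator {H : 𝔸} (hH : IsSelfAdjoint H) (s : ℝ) :
    star (propagator H s) = propagator (-H) s := by
  rw [propagator, propagator, NormedSpace.star_exp, star_smul, hH.star_eq, smul_neg, ← neg_smul]
  simp [Complex.conj_ofReal]

lemma HasDerivAt.star_mul_mul {V : ℝ → 𝔸} {L : 𝔸} {s : ℝ} (hV : HasDerivAt V (I • L * V s) s)
    (hL : IsSelfAdjoint L) (B : 𝔸) :
    HasDerivAt (fun s => star (V s) * B * V s) (-I • (star (V s) * ⁅L, B⁆ * V s)) s := by
  convert (hV.star.mul_const B).fun_mul hV using 1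
  simp only [star_mul, star_smul, hL.star_eq, Ring.lie_def, smul_mul_assoc, mul_smul_comm,
    mul_assoc, mul_sub, sub_mul, neg_smul, smul_sub, Complex.star_def, conj_I, neg_mul]
  abel

end Star

variable [CompleteSpace 𝔸]

lemma hasDerivAt_propagator (H : 𝔸) (s : ℝ) :
    HasDerivAt (propagator H) (propagator H s * (I • H)) s := by
  rw [propagator_eq_exp_smul]
  exact hasDerivAt_exp_smul_const (I • H) s

lemma hasDerivAt_propagator' (H : 𝔸) (s : ℝ) :
    HasDerivAt (propagator H) ((I • H) * propagator H s) s := by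
  rw [propagator_eq_exp_smul]
  exact hasDerivAt_exp_smul_const' (I • H) s

lemma continuous_propagator (H : 𝔸) : Continuous (propagator H) :=
  continuous_iff_continuousAt.2 fun s => (hasDerivAt_propagator H s).continuousAt

lemma propagator_mul_neg (H : 𝔸) (s : ℝ) : propagator H s * propagator (-H) s = 1 := by
  rw [propagator, propagator, smul_neg, ← NormedSpace.exp_add_of_commute_of_mem_ball (𝕂 := ℂ)
    (Commute.refl _).neg_right, add_neg_cancel, NormedSpace.exp_zero] <;>
  simp [NormedSpace.expSeries_radius_eq_top]

lemma propagator_neg_mul (H : 𝔸) (s : ℝ) : propagator (-H) s * propagator H s = 1 := by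
  simpa using propagator_mul_neg (-H) s

lemma hasDerivAt_interactionPropagator (H K : 𝔸) (s : ℝ) :
    HasDerivAt (interactionPropagator H K)
      (I • (propagator H s * (H - K) * propagator (-H) s) * interactionPropagator H K s) s := by
  unfold interactionPropagator
  convert (hasDerivAt_propagator H s).fun_mul (hasDerivAt_propagator' (-K) s) using 1
  have cancel : ∀ x, propagator (-H) s * (propagator H s * x) = x := fun x => by
    rw [← mul_assoc, propagator_neg_mul, one_mul]
  simp only [smul_mul_assoc, mul_assoc, cancel, mul_smul_comm, sub_eq_add_neg, add_mul, mul_add,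
    smul_add, neg_mul, mul_neg, smul_neg]

variable [StarRing 𝔸] [ContinuousStar 𝔸] [StarModule ℂ 𝔸]

lemma propagator_mem_unitary {H : 𝔸} (hH : IsSelfAdjoint H) (s : ℝ) :
    propagator H s ∈ unitary 𝔸 :=
  Unitary.mem_iff.2 ⟨by rw [star_propagator hH, propagator_neg_mul],
    by rw [star_propagator hH, propagator_mul_neg]⟩

lemma interactionPropagator_mem_unitary {H K : 𝔸} (hH : IsSelfAdjoint H) (hK : IsSelfAdjoint K)
    (s : ℝ) : interactionPropagator H K s ∈ unitary 𝔸 :=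
  mul_mem (propagator_mem_unitary hH s) (propagator_mem_unitary hK.neg s)

lemma propagator_conj_eq_interactionPropagator_conj {H K W : 𝔸} (hH : IsSelfAdjoint H)
    (hK : IsSelfAdjoint K) (hWK : Commute W K) (s : ℝ) :
    propagator H s * W * propagator (-H) s =
      interactionPropagator H K s * W * star (interactionPropagator H K s) := by
  rw [interactionPropagator, star_mul, star_propagator hH, star_propagator hK.neg, neg_neg]
  simp only [mul_assoc, ← ((hWK.neg_right).propagator_right s).eq]
  simp only [← mul_assoc (propagator (-K) s), propagator_neg_mul, one_mul]

end Propagator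

lemma commM_eq_lie {n : Type} [Fintype n] (A B : Matrix n n ℂ) : commM A B = ⁅A, B⁆ :=
  (Ring.lie_def A B).symm

section Frobenius

open scoped Matrix.Norms.Frobenius

variable {n : Type} [Fintype n] [DecidableEq n]

lemma opNorm_conjTranspose (A : Matrix n n ℂ) : opNorm Aᴴ = opNorm A := by
  rw [opNorm, opNorm, ← Matrix.star_eq_conjTranspose, map_star,
    ContinuousLinearMap.star_eq_adjoint, ContinuousLinearMap.adjoint.norm_map]

lemma frobenius_norm_sq_eq_sum_row (M : Matrix n n ℂ) :
    ‖M‖ ^ 2 = ∑ i, ‖WithLp.toLp 2 (M i)‖ ^ 2 := by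
  rw [Matrix.frobenius_norm_def, ← Real.rpow_natCast, ← Real.rpow_mul (by positivity)]
  norm_num [EuclideanSpace.norm_sq_eq]

lemma frobenius_norm_mul_le_opNorm_mul (A M : Matrix n n ℂ) : ‖A * M‖ ≤ opNorm A * ‖M‖ := by
  refine (pow_le_pow_iff_left₀ (norm_nonneg _) (by unfold opNorm; positivity) two_ne_zero).1 ?_
  rw [← Matrix.frobenius_norm_transpose, ← Matrix.frobenius_norm_transpose M, mul_pow,
    frobenius_norm_sq_eq_sum_row, frobenius_norm_sq_eq_sum_row, Finset.mul_sum]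
  refine Finset.sum_le_sum fun j _ => ?_
  have hcol : WithLp.toLp 2 ((A * M)ᵀ j) =
      Matrix.toEuclideanCLM (𝕜 := ℂ) A (WithLp.toLp 2 (Mᵀ j)) := by
    rw [Matrix.toEuclideanCLM_toLp, Matrix.transpose_mul, Matrix.mul_apply_eq_vecMul,
      Matrix.vecMul_transpose]
  rw [hcol, ← mul_pow]
  exact pow_le_pow_left₀ (norm_nonneg _) ((Matrix.toEuclideanCLM (𝕜 := ℂ) A).le_opNorm _) 2

lemma frobenius_norm_mul_le_mul_opNorm (M A : Matrix n n ℂ) : ‖M * A‖ ≤ ‖M‖ * opNorm A := by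
  calc ‖M * A‖ = ‖Aᴴ * Mᴴ‖ := by
        rw [← Matrix.conjTranspose_mul, Matrix.frobenius_norm_conjTranspose]
    _ ≤ opNorm Aᴴ * ‖Mᴴ‖ := frobenius_norm_mul_le_opNorm_mul _ _
    _ = ‖M‖ * opNorm A := by
        rw [opNorm_conjTranspose, Matrix.frobenius_norm_conjTranspose, mul_comm]

lemma re_trace_conjTranspose_mul_self (A : Matrix n n ℂ) : (Aᴴ * A).trace.re = ‖A‖ ^ 2 := by
  rw [← Matrix.frobenius_norm_transpose, frobenius_norm_sq_eq_sum_row]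
  simp only [Matrix.trace, Matrix.diag, Matrix.mul_apply, Matrix.conjTranspose_apply, re_sum,
    EuclideanSpace.norm_sq_eq, Matrix.transpose_apply, Complex.star_def, Complex.conj_mul']
  norm_cast

lemma frobNorm_eq_norm_div (A : Matrix n n ℂ) : frobNorm A = ‖A‖ / √(Fintype.card n) := by
  rw [frobNorm, re_trace_conjTranspose_mul_self, Real.sqrt_div (sq_nonneg _),
    Real.sqrt_sq (norm_nonneg _)]

lemma continuous_frobNorm : Continuous (frobNorm : Matrix n n ℂ → ℝ) := by
  simp only [funext frobNorm_eq_norm_div]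
  fun_prop

lemma frobNorm_smul (c : ℂ) (A : Matrix n n ℂ) : frobNorm (c • A) = ‖c‖ * frobNorm A := by
  rw [frobNorm_eq_norm_div, frobNorm_eq_norm_div, norm_smul, mul_div_assoc]

lemma frobNorm_lie_le (A M : Matrix n n ℂ) : frobNorm ⁅A, M⁆ ≤ 2 * opNorm A * frobNorm M := by
  rw [frobNorm_eq_norm_div, frobNorm_eq_norm_div, Ring.lie_def, ← mul_div_assoc]
  gcongr
  calc ‖A * M - M * A‖ ≤ opNorm A * ‖M‖ + ‖M‖ * opNorm A :=
        (norm_sub_le _ _).trans (add_le_add (frobenius_norm_mul_le_opNorm_mul A M)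
          (frobenius_norm_mul_le_mul_opNorm M A))
    _ = 2 * opNorm A * ‖M‖ := by ring

lemma frobNorm_unitary_conj {U : Matrix n n ℂ} (hU : U ∈ unitary (Matrix n n ℂ))
    (M : Matrix n n ℂ) : frobNorm (U * M * star U) = frobNorm M := by
  have hstar : star U * U = 1 := Unitary.star_mul_self_of_mem hU
  have htrace : ((U * M * star U)ᴴ * (U * M * star U)).trace = (Mᴴ * M).trace := by
    simp only [← Matrix.star_eq_conjTranspose, star_mul, star_star, mul_assoc]
    rw [← mul_assoc (star U) U, hstar, one_mul, Matrix.trace_mul_comm]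
    simp only [mul_assoc, hstar, mul_one]
  rw [frobNorm, frobNorm, htrace]

lemma frobNorm_le_add_integral_of_hasDerivAt {f f' : ℝ → Matrix n n ℂ}
    (hf : ∀ s, HasDerivAt f (f' s) s) (hf' : Continuous f') {t : ℝ} (ht : 0 ≤ t) :
    frobNorm (f t) ≤ frobNorm (f 0) + ∫ s in (0 : ℝ)..t, frobNorm (f' s) := by
  have hftc : f t = f 0 + ∫ s in (0 : ℝ)..t, f' s := by
    rw [intervalIntegral.integral_eq_sub_of_hasDerivAt (fun s _ => hf s)
      (hf'.intervalIntegrable 0 t), add_sub_cancel]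
  simp only [frobNorm_eq_norm_div, intervalIntegral.integral_div, ← add_div]
  gcongr
  rw [hftc]
  exact (norm_add_le _ _).trans
    (add_le_add_right (intervalIntegral.norm_integral_le_integral_norm ht) _)

lemma timeEv_eq_propagator (H : Matrix n n ℂ) (t : ℝ) (A : Matrix n n ℂ) :
    timeEv H t A = propagator H t * A * propagator (-H) t := by
  rw [timeEv, propagator, propagator, smul_neg, neg_smul]
  rfl

lemma IsSelfAdjoint.timeEv {H A : Matrix n n ℂ} (hH : IsSelfAdjoint H) (hA : IsSelfAdjoint A)
    (t : ℝ) : IsSelfAdjoint (timeEv H t A) := by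
  rw [timeEv_eq_propagator, ← star_propagator hH]
  exact hA.conjugate _

lemma continuous_timeEv (H A : Matrix n n ℂ) : Continuous fun t => timeEv H t A := by
  simp only [timeEv_eq_propagator]
  exact ((continuous_propagator H).mul continuous_const).mul (continuous_propagator (-H))

theorem frobNorm_lie_star_mul_mul_le {V L : ℝ → Matrix n n ℂ}
    (hVu : ∀ s, V s ∈ unitary (Matrix n n ℂ)) (hV0 : V 0 = 1)
    (hV : ∀ s, HasDerivAt V (I • L s * V s) s) (hL : ∀ s, IsSelfAdjoint (L s))
    (hLc : Continuous L) (W B : Matrix n n ℂ) {t : ℝ} (ht : 0 ≤ t) :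
    frobNorm ⁅W, star (V t) * B * V t⁆ ≤
      frobNorm ⁅W, B⁆ + 2 * opNorm W * ∫ s in (0 : ℝ)..t, frobNorm ⁅L s, B⁆ := by
  have hVc : Continuous V := continuous_iff_continuousAt.2 fun s => (hV s).continuousAt
  have hderiv : ∀ s, HasDerivAt (fun s => ⁅W, star (V s) * B * V s⁆)
      ⁅W, -I • (star (V s) * ⁅L s, B⁆ * V s)⁆ s := fun s => by
    have := (((hV s).star_mul_mul (hL s) B).const_mul W).fun_sub
      (((hV s).star_mul_mul (hL s) B).mul_const W)
    simp only [Ring.lie_def]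
    exact this
  have hcont : Continuous fun s => ⁅W, -I • (star (V s) * ⁅L s, B⁆ * V s)⁆ := by
    simp only [Ring.lie_def]
    fun_prop
  have hpoint : ∀ s, frobNorm ⁅W, -I • (star (V s) * ⁅L s, B⁆ * V s)⁆ ≤
      2 * opNorm W * frobNorm ⁅L s, B⁆ := fun s => by
    have hconj := frobNorm_unitary_conj (Unitary.star_mem (hVu s)) ⁅L s, B⁆
    rw [star_star] at hconj
    calc _ ≤ 2 * opNorm W * frobNorm (-I • (star (V s) * ⁅L s, B⁆ * V s)) := frobNorm_lie_le _ _
      _ = 2 * opNorm W * frobNorm ⁅L s, B⁆ := by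
        rw [frobNorm_smul, norm_neg, norm_I, one_mul, hconj]
  calc frobNorm ⁅W, star (V t) * B * V t⁆
      ≤ frobNorm ⁅W, star (V 0) * B * V 0⁆ +
          ∫ s in (0 : ℝ)..t, frobNorm ⁅W, -I • (star (V s) * ⁅L s, B⁆ * V s)⁆ :=
        frobNorm_le_add_integral_of_hasDerivAt hderiv hcont ht
    _ ≤ frobNorm ⁅W, B⁆ + ∫ s in (0 : ℝ)..t, 2 * opNorm W * frobNorm ⁅L s, B⁆ := by
        rw [hV0, star_one, one_mul, mul_one]
        gcongr
        refine intervalIntegral.integral_mono_on ht ?_ ?_ fun s _ => hpoint s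
        · exact (continuous_frobNorm.comp hcont).intervalIntegrable 0 t
        · exact (continuous_const.mul (continuous_frobNorm.comp
            (by simp only [Ring.lie_def]; fun_prop))).intervalIntegrable 0 t
    _ = frobNorm ⁅W, B⁆ + 2 * opNorm W * ∫ s in (0 : ℝ)..t, frobNorm ⁅L s, B⁆ := by
        rw [intervalIntegral.integral_const_mul]

theorem frobNorm_commM_timeEv_le {H K W : Matrix n n ℂ} (hH : IsSelfAdjoint H)
    (hK : IsSelfAdjoint K) (hWK : Commute W K) (B : Matrix n n ℂ) {t : ℝ} (ht : 0 ≤ t) :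
    frobNorm (commM (timeEv H t W) B) ≤ frobNorm (commM W B) +
      2 * opNorm W * ∫ s in (0 : ℝ)..t, frobNorm (commM (timeEv H s (H - K)) B) := by
  have hVu := interactionPropagator_mem_unitary hH hK
  have hV : ∀ s, HasDerivAt (interactionPropagator H K)
      (I • timeEv H s (H - K) * interactionPropagator H K s) s := fun s => by
    have := hasDerivAt_interactionPropagator H K s
    rw [← timeEv_eq_propagator] at this
    exact this
  simp only [commM_eq_lie]
  calc frobNorm ⁅timeEv H t W, B⁆
      = frobNorm ⁅W, star (interactionPropagator H K t) * B * interactionPropagator H K t⁆ := by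
        rw [timeEv_eq_propagator, propagator_conj_eq_interactionPropagator_conj hH hK hWK,
          lie_conj_unitary (hVu t), frobNorm_unitary_conj (hVu t)]
    _ ≤ _ := frobNorm_lie_star_mul_mul_le hVu (interactionPropagator_zero H K) hV
        (fun s => hH.timeEv (hH.sub hK) s) (continuous_timeEv H (H - K)) W B ht

end Frobenius
section Support

variable {Λ : Type} [Fintype Λ] [DecidableEq Λ]

lemma IsSupportedOn.mul_apply_of_disjoint {A C : SpinOp Λ} {X Z : Finset Λ}
    (hA : IsSupportedOn A X) (hC : IsSupportedOn C Z) (hXZ : Disjoint X Z) (a b : SpinConf Λ) :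
    (A * C) a b = A a (X.piecewise b a) * C (X.piecewise b a) b := by
  rw [Matrix.mul_apply]
  refine Finset.sum_eq_single _ (fun c _ hc => ?_) (by simp)
  obtain ⟨i, hi⟩ := Function.ne_iff.1 hc
  by_cases hiX : i ∈ X
  · rw [Finset.piecewise_eq_of_mem _ _ _ hiX] at hi
    rw [hC.1 c b ⟨i, Finset.disjoint_left.1 hXZ hiX, hi⟩, mul_zero]
  · rw [Finset.piecewise_eq_of_notMem _ _ _ hiX] at hi
    rw [hA.1 a c ⟨i, hiX, Ne.symm hi⟩, zero_mul]

lemma IsSupportedOn.commute_of_disjoint {A C : SpinOp Λ} {X Z : Finset Λ}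
    (hA : IsSupportedOn A X) (hC : IsSupportedOn C Z) (hXZ : Disjoint X Z) : Commute A C := by
  ext a b
  rw [hA.mul_apply_of_disjoint hC hXZ, hC.mul_apply_of_disjoint hA hXZ.symm]
  have hZX : ∀ i ∈ Z, i ∉ X := fun i hi hiX => Finset.disjoint_left.1 hXZ hiX hi
  by_cases hab : ∀ i ∉ X, i ∉ Z → a i = b i
  · have hA' : A a (X.piecewise b a) = A (Z.piecewise b a) b := by
      refine hA.2 _ _ _ _ (fun i hi => ?_) (fun i hi => ?_) (fun i hi => ?_) (fun i hi => ?_)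
      · simp [Finset.disjoint_left.1 hXZ hi]
      · simp [hi]
      · simp [hi]
      · by_cases hiZ : i ∈ Z
        · simp [hiZ]
        · simp [hiZ, hab i hi hiZ]
    have hC' : C (X.piecewise b a) b = C a (Z.piecewise b a) := by
      refine hC.2 _ _ _ _ (fun i hi => ?_) (fun i hi => ?_) (fun i hi => ?_) (fun i hi => ?_)
      · simp [hZX i hi]
      · simp [hi]
      · by_cases hiX : i ∈ X
        · simp [hiX]
        · simp [hiX, hab i hiX hi]
      · simp [hi]
    rw [hA', hC', mul_comm]
  · simp only [not_forall] at hab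
    obtain ⟨i, hiX, hiZ, hne⟩ := hab
    rw [hC.1 _ b ⟨i, hiZ, by simpa [hiX] using hne⟩, hA.1 _ b ⟨i, hiX, by simpa [hiZ] using hne⟩,
      mul_zero, mul_zero]

end Support

/-- **Integrated Lieb–Robinson differential inequality in the Frobenius norm:**
`‖[W_X(t),B]‖_F ≤ ‖[W_X,B]‖_F + 2‖W_X‖ ∫₀^t ‖[H_X(s),B]‖_F ds`. -/
theorem integrated_LR_differential_inequality
    {Λ : Type} [Fintype Λ] [DecidableEq Λ]
    (h : Finset Λ → SpinOp Λ)
    (hsupp : ∀ Z, IsSupportedOn (h Z) Z)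
    (hherm : ∀ Z, (h Z).IsHermitian)
    (X : Finset Λ) (W : SpinOp Λ) (hW : IsSupportedOn W X)
    (B : SpinOp Λ) (t : ℝ) (ht : 0 ≤ t) :
    frobNorm (commM (timeEv (∑ Z : Finset Λ, h Z) t W) B)
      ≤ frobNorm (commM W B) +
        2 * opNorm W *
          ∫ s in (0 : ℝ)..t,
            frobNorm (commM
              (timeEv (∑ Z : Finset Λ, h Z) s
                (∑ Z ∈ Finset.univ.filter (fun Z : Finset Λ => (Z ∩ X).Nonempty), h Z))
              B) := by
  set Hc := ∑ Z ∈ Finset.univ.filter (fun Z : Finset Λ => ¬(Z ∩ X).Nonempty), h Z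
  have hsplit : ∑ Z, h Z - Hc =
      ∑ Z ∈ Finset.univ.filter (fun Z : Finset Λ => (Z ∩ X).Nonempty), h Z :=
    sub_eq_of_eq_add (Finset.sum_filter_add_sum_filter_not _ _ _).symm
  have hWHc : Commute W Hc := Commute.sum_right _ _ _ fun Z hZ =>
    hW.commute_of_disjoint (hsupp Z) <| Finset.disjoint_iff_inter_eq_empty.2 <| by
      rw [Finset.inter_comm, ← Finset.not_nonempty_iff_eq_empty]
      exact (Finset.mem_filter.1 hZ).2
  rw [← hsplit]
  exact frobNorm_commM_timeEv_le (isSelfAdjoint_sum _ fun Z _ => (hherm Z).isSelfAdjoint)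
    (isSelfAdjoint_sum _ fun Z _ => (hherm Z).isSelfAdjoint) hWHc B ht
end

section
/- Two-point string-sum bound (Lemma 3 of the Supplement, in terms of interaction weights). For every integer m ≥ 0 and all sites i, i' ∈ Λ, the sum over all connected sequences (Z₀, Z₁, …, Z_m) of nonempty subsets of Λ of size at most k whose union contains both i and i', of the products ∏_{j=0}^{m} a_{Z_j}, satisfies Σ_{(Z₀,…,Z_m) connected, {i,i'} ⊆ Z₀∪⋯∪Z_m} ∏_{j=0}^{m} a_{Z_j} ≤ m! (m+1)² g̃^{m+1} (d(i,i')+1)^{−α}. -/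
open scoped Classical ENNReal Matrix ComplexOrder
open Complex

/-- A sequence `(Z₀,…,Z_m)` of subsets is connected if each `Z_j` (`j ≥ 1`)
intersects `Z₀ ∪ ⋯ ∪ Z_{j-1}`. -/
def SeqConnected {Λ : Type} [Fintype Λ] [DecidableEq Λ] {m : ℕ}
    (w : Fin (m + 1) → Finset Λ) : Prop :=
  ∀ j : Fin (m + 1), 0 < (j : ℕ) →
    (w j ∩ (Finset.univ.filter
      (fun j' : Fin (m + 1) => (j' : ℕ) < (j : ℕ))).biUnion w).Nonempty


/-!
Removing the last set `Z` of a connected sequence leaves a connected sequence with support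
`U = Z₀ ∪ ⋯ ∪ Z_m` and a set `Z` of size at most `k` meeting `U`. The sum over such `Z` is
controlled either from a site of `U`, where `g`, `J` and `λ` bound the weight of the sets through
that site and `|U| ≤ (m+1)k`, or, after exchanging the order of summation, from a site of `Z`,
which costs the one-point sum `P_m(x)` over sequences whose support contains `x`.
With `f(x,y) = (d(x,y)+1)^{-α}` this gives, by induction on `m`,
* `P_m(x) ≤ (m+1)! g (gk)^m`;
* `B_m(i,i') ≤ (m+1)(m+1)! g̃^m λJ f(i,i')` for the sum over supports containing `i` weighted by
  `∑_{x ∈ U} f(x,i')`, using `∑_{Z ∋ x} a_Z ∑_{z ∈ Z} f(z,i') ≤ λJ f(x,i')`;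
* the two-point bound, whose constants satisfy
  `(m+1) · m!(m+1)² + 2(m+1)(m+1)! + (m+1)! = (m+1)!(m+2)²`.
-/

open Finset
open scoped Nat

section

variable {Λ : Type} [DecidableEq Λ]

lemma biUnion_snoc {n : ℕ} (w : Fin n → Finset Λ) (Z : Finset Λ) :
    univ.biUnion (Fin.snoc w Z : Fin (n + 1) → Finset Λ) = univ.biUnion w ∪ Z := by
  ext x
  simp [Fin.exists_fin_succ']

lemma biUnion_filter_lt_snoc {n : ℕ} (w : Fin (n + 1) → Finset Λ) (Z : Finset Λ) (c : ℕ)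
    (hc : c ≤ n + 1) :
    (univ.filter fun j : Fin (n + 2) => (j : ℕ) < c).biUnion
        (Fin.snoc w Z : Fin (n + 2) → Finset Λ) =
      (univ.filter fun j : Fin (n + 1) => (j : ℕ) < c).biUnion w := by
  ext x
  simp [Fin.exists_fin_succ', hc.not_gt]

lemma seqConnected_snoc_iff [Fintype Λ] {n : ℕ} (w : Fin (n + 1) → Finset Λ) (Z : Finset Λ) :
    SeqConnected (Fin.snoc w Z : Fin (n + 2) → Finset Λ) ↔
      SeqConnected w ∧ (Z ∩ univ.biUnion w).Nonempty := by
  rw [SeqConnected, Fin.forall_fin_succ']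
  simp only [Fin.snoc_castSucc, Fin.snoc_last, Fin.val_castSucc, Fin.val_last,
    biUnion_filter_lt_snoc w Z _ le_rfl,
    fun j : Fin (n + 1) => biUnion_filter_lt_snoc w Z j j.isLt.le]
  simp [SeqConnected, Fin.is_le]

lemma sum_filter_inter_nonempty_le {β : Type*} (S : Finset β) (T : β → Finset Λ)
    (U : Finset Λ) (Ψ : β → ℝ) (hΨ : ∀ b, 0 ≤ Ψ b) :
    ∑ b ∈ S with (T b ∩ U).Nonempty, Ψ b ≤ ∑ x ∈ U, ∑ b ∈ S with x ∈ T b, Ψ b := by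
  simp only [sum_filter]
  rw [sum_comm]
  refine sum_le_sum fun b _ => ?_
  split_ifs with h
  · obtain ⟨x, hx⟩ := h
    rw [mem_inter] at hx
    calc Ψ b = if x ∈ T b then Ψ b else 0 := by rw [if_pos hx.1]
      _ ≤ _ := single_le_sum (f := fun x => if x ∈ T b then Ψ b else 0)
          (fun _ _ => by split_ifs <;> simp [hΨ]) hx.2
  · exact sum_nonneg fun _ _ => by split_ifs <;> simp [hΨ]

lemma sum_union_le_add (s t : Finset Λ) {ρ : Λ → ℝ} (hρ : ∀ x, 0 ≤ ρ x) :
    ∑ x ∈ s ∪ t, ρ x ≤ ∑ x ∈ s, ρ x + ∑ x ∈ t, ρ x := by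
  rw [← sum_union_inter]
  exact le_add_of_nonneg_right (sum_nonneg fun x _ => hρ x)

end

variable {Λ : Type} [Fintype Λ]

def boundedSets (k : ℕ) : Finset (Finset Λ) :=
  univ.filter fun Z => Z.Nonempty ∧ Z.card ≤ k

lemma sum_boundedSets_ite_le {k : ℕ} (ρ : Finset Λ → ℝ) (hρ : ∀ Z, 0 ≤ ρ Z)
    (p : Finset Λ → Prop) [DecidablePred p] :
    ∑ Z ∈ boundedSets k, (if p Z then ρ Z else 0) ≤ ∑ Z with p Z, ρ Z := by
  rw [← sum_filter]
  exact sum_le_sum_of_subset_of_nonneg (filter_subset_filter _ (subset_univ _))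
    fun Z _ _ => hρ Z

variable [DecidableEq Λ]

noncomputable def connectedSeqs (k m : ℕ) : Finset (Fin (m + 1) → Finset Λ) :=
  univ.filter fun w => (∀ j, (w j).Nonempty ∧ (w j).card ≤ k) ∧ SeqConnected w

def attachable (k : ℕ) (U : Finset Λ) : Finset (Finset Λ) :=
  (boundedSets k).filter fun Z => (Z ∩ U).Nonempty

lemma snoc_mem_connectedSeqs_iff {k m : ℕ} (w : Fin (m + 1) → Finset Λ) (Z : Finset Λ) :
    (Fin.snoc w Z : Fin (m + 2) → Finset Λ) ∈ connectedSeqs k (m + 1) ↔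
      w ∈ connectedSeqs k m ∧ Z ∈ attachable k (univ.biUnion w) := by
  simp only [connectedSeqs, attachable, boundedSets, mem_filter, mem_univ, true_and,
    Fin.forall_fin_succ', Fin.snoc_castSucc, Fin.snoc_last, seqConnected_snoc_iff]
  tauto

lemma sum_connectedSeqs_succ {k m : ℕ} (F : (Fin (m + 2) → Finset Λ) → ℝ) :
    ∑ w ∈ connectedSeqs k (m + 1), F w =
      ∑ w ∈ connectedSeqs k m, ∑ Z ∈ attachable k (univ.biUnion w), F (Fin.snoc w Z) := by
  rw [sum_sigma']
  refine sum_nbij' (fun w => ⟨Fin.init w, w (Fin.last _)⟩) (fun p => Fin.snoc p.1 p.2)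
    (fun w hw => ?_) (fun p hp => ?_) (fun w _ => Fin.snoc_init_self w)
    (fun p _ => by simp) (fun w _ => by simp)
  · rw [← Fin.snoc_init_self w, snoc_mem_connectedSeqs_iff] at hw
    simpa using hw
  · simpa [snoc_mem_connectedSeqs_iff] using hp

lemma card_biUnion_le_of_mem_connectedSeqs {k m : ℕ} {w : Fin (m + 1) → Finset Λ}
    (hw : w ∈ connectedSeqs k m) : (univ.biUnion w).card ≤ (m + 1) * k := by
  simpa using card_biUnion_le_card_mul univ w k fun j _ => ((mem_filter.1 hw).2.1 j).2

section SeqSum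

variable (a : Finset Λ → ℝ) (k : ℕ)

/-- `P_m(i)`, `B_m(i,i')` and the two-point sum are `seqSum` with `G U` equal to `1_{i ∈ U}`,
`1_{i ∈ U} ∑_{x ∈ U} f(x,i')` and `1_{i ∈ U ∧ i' ∈ U}`. -/
noncomputable def seqSum (m : ℕ) (G : Finset Λ → ℝ) : ℝ :=
  ∑ w ∈ connectedSeqs k m, (∏ j, a (w j)) * G (univ.biUnion w)

lemma seqSum_zero (G : Finset Λ → ℝ) : seqSum a k 0 G = ∑ Z ∈ boundedSets k, a Z * G Z := by
  refine sum_nbij' (fun w => w 0) (fun Z _ => Z) (fun w hw => ?_) (fun Z hZ => ?_)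
    (fun w _ => funext fun j => by rw [Fin.fin_one_eq_zero j]) (fun _ _ => rfl)
    (fun w _ => by simp)
  · simp only [connectedSeqs, boundedSets, mem_filter, mem_univ, true_and] at hw ⊢
    exact hw.1 0
  · simp only [connectedSeqs, boundedSets, mem_filter, mem_univ, true_and] at hZ ⊢
    refine ⟨fun _ => hZ, fun j hj => absurd hj ?_⟩
    simp [Fin.fin_one_eq_zero j]

lemma seqSum_succ (m : ℕ) (G : Finset Λ → ℝ) :
    seqSum a k (m + 1) G = seqSum a k m fun U => ∑ Z ∈ attachable k U, a Z * G (U ∪ Z) := by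
  simp only [seqSum, sum_connectedSeqs_succ, mul_sum, Fin.prod_univ_castSucc,
    Fin.snoc_castSucc, Fin.snoc_last, biUnion_snoc, mul_assoc]

lemma seqSum_ite_mem_and_mem (m : ℕ) (i i' : Λ) :
    seqSum a k m (fun U => if i ∈ U ∧ i' ∈ U then 1 else 0) =
      ∑ w ∈ univ.filter (fun w : Fin (m + 1) → Finset Λ =>
        (∀ j, (w j).Nonempty ∧ (w j).card ≤ k) ∧ SeqConnected w ∧
          i ∈ univ.biUnion w ∧ i' ∈ univ.biUnion w), ∏ j, a (w j) := by
  simp only [seqSum, connectedSeqs, mul_ite, mul_one, mul_zero, ← sum_filter, filter_filter,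
    and_assoc]

variable {a k}

lemma seqSum_add (m : ℕ) (G₁ G₂ : Finset Λ → ℝ) :
    seqSum a k m (fun U => G₁ U + G₂ U) = seqSum a k m G₁ + seqSum a k m G₂ := by
  simp only [seqSum, mul_add, sum_add_distrib]

lemma seqSum_const_mul (m : ℕ) (c : ℝ) (G : Finset Λ → ℝ) :
    seqSum a k m (fun U => c * G U) = c * seqSum a k m G := by
  simp only [seqSum, mul_sum, mul_left_comm]

lemma seqSum_mono (ha : ∀ Z, 0 ≤ a Z) {m : ℕ} {G₁ G₂ : Finset Λ → ℝ}
    (h : ∀ U : Finset Λ, U.card ≤ (m + 1) * k → G₁ U ≤ G₂ U) :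
    seqSum a k m G₁ ≤ seqSum a k m G₂ :=
  sum_le_sum fun w hw => mul_le_mul_of_nonneg_left
    (h _ (card_biUnion_le_of_mem_connectedSeqs hw)) (prod_nonneg fun j _ => ha (w j))

lemma sum_attachable_le (U : Finset Λ) (Ψ : Finset Λ → ℝ) (hΨ : ∀ Z, 0 ≤ Ψ Z) (ρ : Λ → ℝ)
    (hρ : ∀ x, ∑ Z with x ∈ Z, Ψ Z ≤ ρ x) : ∑ Z ∈ attachable k U, Ψ Z ≤ ∑ x ∈ U, ρ x :=
  (sum_filter_inter_nonempty_le _ id U Ψ hΨ).trans <| sum_le_sum fun x _ =>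
    (sum_le_sum_of_subset_of_nonneg (filter_subset_filter _ (subset_univ _))
      fun Z _ _ => hΨ Z).trans (hρ x)

lemma seqSum_mul_sum_attachable_le (ha : ∀ Z, 0 ≤ a Z) (m : ℕ) (H Ψ : Finset Λ → ℝ)
    (hH : ∀ U, 0 ≤ H U) (hΨ : ∀ Z, 0 ≤ Ψ Z) :
    seqSum a k m (fun U => H U * ∑ Z ∈ attachable k U, Ψ Z) ≤
      ∑ Z ∈ boundedSets k, Ψ Z * ∑ x ∈ Z, seqSum a k m fun U => if x ∈ U then H U else 0 := by
  have hW : ∀ w : Fin (m + 1) → Finset Λ, 0 ≤ (∏ j, a (w j)) * H (univ.biUnion w) :=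
    fun w => mul_nonneg (prod_nonneg fun j _ => ha (w j)) (hH _)
  calc seqSum a k m (fun U => H U * ∑ Z ∈ attachable k U, Ψ Z)
      = ∑ Z ∈ boundedSets k, Ψ Z * ∑ w ∈ connectedSeqs k m with (univ.biUnion w ∩ Z).Nonempty,
          (∏ j, a (w j)) * H (univ.biUnion w) := by
        simp only [seqSum, attachable, sum_filter, mul_sum]
        rw [sum_comm]
        refine sum_congr rfl fun Z _ => sum_congr rfl fun w _ => ?_
        rw [inter_comm]
        split_ifs <;> ring
    _ ≤ ∑ Z ∈ boundedSets k, Ψ Z * ∑ x ∈ Z, ∑ w ∈ connectedSeqs k m with x ∈ univ.biUnion w,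
          (∏ j, a (w j)) * H (univ.biUnion w) :=
        sum_le_sum fun Z _ => mul_le_mul_of_nonneg_left
          (sum_filter_inter_nonempty_le _ _ Z _ hW) (hΨ Z)
    _ = _ := by simp only [seqSum, sum_filter, mul_ite, mul_zero]

lemma seqSum_sum_attachable_le (ha : ∀ Z, 0 ≤ a Z) {m : ℕ} (Ψ : Finset Λ → ℝ)
    (hΨ : ∀ Z, 0 ≤ Ψ Z) {c : ℝ} (hc0 : 0 ≤ c)
    (hc : ∀ x, seqSum a k m (fun U => if x ∈ U then 1 else 0) ≤ c) :
    seqSum a k m (fun U => ∑ Z ∈ attachable k U, Ψ Z) ≤ k * c * ∑ Z ∈ boundedSets k, Ψ Z := by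
  calc seqSum a k m (fun U => ∑ Z ∈ attachable k U, Ψ Z)
      ≤ ∑ Z ∈ boundedSets k, Ψ Z * ∑ x ∈ Z, seqSum a k m fun U => if x ∈ U then 1 else 0 := by
        simpa using seqSum_mul_sum_attachable_le ha m (fun _ => 1) Ψ (fun _ => zero_le_one) hΨ
    _ ≤ ∑ Z ∈ boundedSets k, Ψ Z * (k * c) := by
        gcongr with Z hZ
        · exact hΨ Z
        calc ∑ x ∈ Z, (seqSum a k m fun U => if x ∈ U then 1 else 0) ≤ ∑ x ∈ Z, c :=
              sum_le_sum fun x _ => hc x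
          _ ≤ k * c := by
              rw [sum_const, nsmul_eq_mul]
              gcongr
              exact_mod_cast (mem_filter.1 hZ).2.2
    _ = k * c * ∑ Z ∈ boundedSets k, Ψ Z := by rw [← sum_mul, mul_comm]

end SeqSum

section Bounds

variable {a : Finset Λ → ℝ} {k : ℕ} {g J lam : ℝ} {f : Λ → Λ → ℝ}

lemma sum_mem_mul_sum_le (hJ : 0 ≤ J) (hf : ∀ x y, 0 ≤ f x y)
    (hpair : ∀ x y, ∑ Z with x ∈ Z ∧ y ∈ Z, a Z ≤ J * f x y)
    (hconv : ∀ x y, ∑ z, f x z * f z y ≤ lam * f x y) (x y : Λ) :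
    ∑ Z with x ∈ Z, a Z * ∑ z ∈ Z, f z y ≤ lam * J * f x y :=
  calc ∑ Z with x ∈ Z, a Z * ∑ z ∈ Z, f z y
      = ∑ z, (∑ Z with x ∈ Z ∧ z ∈ Z, a Z) * f z y := by
        simp only [mul_sum, sum_mul]
        exact sum_comm' fun Z z => by simp [and_comm]
    _ ≤ ∑ z, J * f x z * f z y := by
        gcongr with z
        · exact hf z y
        · exact hpair x z
    _ ≤ lam * J * f x y := by
        simp only [mul_assoc, ← mul_sum]
        rw [mul_left_comm]
        exact mul_le_mul_of_nonneg_left (hconv x y) hJ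

lemma sum_attachable_le_card_mul (ha : ∀ Z, 0 ≤ a Z) (hg : 0 ≤ g)
    (hsite : ∀ i, ∑ Z with i ∈ Z, a Z ≤ g) {n : ℕ} {U : Finset Λ} (hU : U.card ≤ n) :
    ∑ Z ∈ attachable k U, a Z ≤ n * g :=
  calc ∑ Z ∈ attachable k U, a Z ≤ ∑ _ ∈ U, g := sum_attachable_le U a ha _ hsite
    _ ≤ n * g := by
      rw [sum_const, nsmul_eq_mul]
      gcongr

lemma natCast_mul_factorial_mul_pow_le (hg : 0 ≤ g) {G : ℝ} (hgk : g * k ≤ G) (m : ℕ) :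
    k * ((m + 1)! * g * (g * k) ^ m) ≤ (m + 1)! * G ^ (m + 1) :=
  calc k * ((m + 1)! * g * (g * k) ^ m) = (m + 1)! * (g * k) ^ (m + 1) := by ring
    _ ≤ (m + 1)! * G ^ (m + 1) := by gcongr

lemma sum_attachable_mul_ite_mem_union_le (ha : ∀ Z, 0 ≤ a Z) (hg : 0 ≤ g)
    (hsite : ∀ i, ∑ Z with i ∈ Z, a Z ≤ g) {n : ℕ} {U : Finset Λ} (hU : U.card ≤ n) (i : Λ) :
    ∑ Z ∈ attachable k U, a Z * (if i ∈ U ∪ Z then 1 else 0) ≤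
      n * g * (if i ∈ U then 1 else 0) + ∑ Z ∈ attachable k U, if i ∈ Z then a Z else 0 := by
  calc ∑ Z ∈ attachable k U, a Z * (if i ∈ U ∪ Z then 1 else 0)
      ≤ ∑ Z ∈ attachable k U, ((if i ∈ U then 1 else 0) * a Z + if i ∈ Z then a Z else 0) := by
        refine sum_le_sum fun Z _ => ?_
        by_cases hiU : i ∈ U <;> by_cases hiZ : i ∈ Z <;> simp [hiU, hiZ, ha Z]
    _ ≤ _ := by
        rw [sum_add_distrib, ← mul_sum]
        have hmass := sum_attachable_le_card_mul (k := k) ha hg hsite hU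
        gcongr ?_ + _
        split_ifs <;> simp [hmass]

theorem seqSum_mem_le (ha : ∀ Z, 0 ≤ a Z) (hg : 0 ≤ g) (hsite : ∀ i, ∑ Z with i ∈ Z, a Z ≤ g)
    (m : ℕ) (i : Λ) :
    seqSum a k m (fun U => if i ∈ U then 1 else 0) ≤ (m + 1)! * g * (g * k) ^ m := by
  induction m generalizing i with
  | zero =>
    simpa [seqSum_zero, mul_ite] using sum_boundedSets_ite_le a ha (i ∈ ·) |>.trans (hsite i)
  | succ m ih =>
    have hp : (0 : ℝ) ≤ (m + 1)! * g * (g * k) ^ m := by positivity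
    calc seqSum a k (m + 1) (fun U => if i ∈ U then 1 else 0)
        ≤ seqSum a k m (fun U => ((m + 1) * k : ℕ) * g * (if i ∈ U then 1 else 0) +
            ∑ Z ∈ attachable k U, if i ∈ Z then a Z else 0) := by
          rw [seqSum_succ]
          exact seqSum_mono ha fun U hU => sum_attachable_mul_ite_mem_union_le ha hg hsite hU i
      _ ≤ ((m + 1) * k : ℕ) * g * ((m + 1)! * g * (g * k) ^ m) +
            k * ((m + 1)! * g * (g * k) ^ m) * g := by
          rw [seqSum_add, seqSum_const_mul]
          gcongr
          · exact ih i
          · refine (seqSum_sum_attachable_le ha _ (fun Z => ?_) hp ih).trans ?_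
            · split_ifs <;> simp [ha Z]
            · gcongr
              exact (sum_boundedSets_ite_le a ha _).trans (hsite i)
      _ = (m + 1 + 1)! * g * (g * k) ^ (m + 1) := by
          push_cast [Nat.factorial_succ]
          ring

lemma sum_attachable_mul_ite_mem_sum_union_le (ha : ∀ Z, 0 ≤ a Z) (hg : 0 ≤ g) (hJ : 0 ≤ J)
    (hf : ∀ x y, 0 ≤ f x y) (hsite : ∀ i, ∑ Z with i ∈ Z, a Z ≤ g)
    (hpair : ∀ x y, ∑ Z with x ∈ Z ∧ y ∈ Z, a Z ≤ J * f x y)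
    (hconv : ∀ x y, ∑ z, f x z * f z y ≤ lam * f x y)
    {n : ℕ} {U : Finset Λ} (hU : U.card ≤ n) (i i' : Λ) :
    ∑ Z ∈ attachable k U, a Z * (if i ∈ U ∪ Z then ∑ x ∈ U ∪ Z, f x i' else 0) ≤
      (n * g + lam * J) * (if i ∈ U then ∑ x ∈ U, f x i' else 0) +
        (∑ x ∈ U, f x i') * ∑ Z ∈ attachable k U, (if i ∈ Z then a Z else 0) +
        ∑ Z ∈ attachable k U, if i ∈ Z then a Z * ∑ x ∈ Z, f x i' else 0 := by
  set F : Finset Λ → ℝ := fun V => ∑ x ∈ V, f x i' with hF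
  have hF0 : ∀ V, 0 ≤ F V := fun V => sum_nonneg fun x _ => hf x i'
  have hkernel : ∑ Z ∈ attachable k U, a Z * F Z ≤ lam * J * F U := by
    rw [hF, mul_sum]
    exact sum_attachable_le U _ (fun Z => mul_nonneg (ha Z) (hF0 Z)) _
      (sum_mem_mul_sum_le hJ hf hpair hconv · i')
  calc ∑ Z ∈ attachable k U, a Z * (if i ∈ U ∪ Z then F (U ∪ Z) else 0)
      ≤ ∑ Z ∈ attachable k U, ((if i ∈ U then F U else 0) * a Z +
          (if i ∈ U then 1 else 0) * (a Z * F Z) + F U * (if i ∈ Z then a Z else 0) +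
          if i ∈ Z then a Z * F Z else 0) := by
        refine sum_le_sum fun Z _ => ?_
        have hunion : a Z * F (U ∪ Z) ≤ a Z * F U + a Z * F Z := by
          rw [← mul_add]
          exact mul_le_mul_of_nonneg_left (sum_union_le_add U Z (hf · i')) (ha Z)
        have := mul_nonneg (ha Z) (hF0 U)
        have := mul_nonneg (ha Z) (hF0 Z)
        by_cases hiU : i ∈ U <;> by_cases hiZ : i ∈ Z <;> simp [hiU, hiZ] <;> linarith
    _ ≤ _ := by
        simp only [sum_add_distrib, ← mul_sum]
        rw [add_mul]
        have hmass := sum_attachable_le_card_mul (k := k) ha hg hsite hU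
        gcongr ?_ + ?_ + _ + _ <;> split_ifs
        · rw [mul_comm]; exact mul_le_mul_of_nonneg_right hmass (hF0 U)
        · simp
        · simpa using hkernel
        · simp

lemma sum_boundedSets_ite_mul_sum_le (ha : ∀ Z, 0 ≤ a Z) (hJ : 0 ≤ J) (hf : ∀ x y, 0 ≤ f x y)
    (hpair : ∀ x y, ∑ Z with x ∈ Z ∧ y ∈ Z, a Z ≤ J * f x y)
    (hconv : ∀ x y, ∑ z, f x z * f z y ≤ lam * f x y) {i i' : Λ} {S : Λ → ℝ} {c : ℝ}
    (hc : 0 ≤ c) (hS : ∀ x, S x ≤ c * f x i') :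
    ∑ Z ∈ boundedSets k, (if i ∈ Z then a Z else 0) * ∑ x ∈ Z, S x ≤ c * (lam * J * f i i') :=
  have haF : ∀ Z, 0 ≤ a Z * ∑ x ∈ Z, f x i' :=
    fun Z => mul_nonneg (ha Z) (sum_nonneg fun x _ => hf x i')
  calc ∑ Z ∈ boundedSets k, (if i ∈ Z then a Z else 0) * ∑ x ∈ Z, S x
      ≤ ∑ Z ∈ boundedSets k, if i ∈ Z then c * (a Z * ∑ x ∈ Z, f x i') else 0 := by
        refine sum_le_sum fun Z _ => ?_
        split_ifs
        · calc a Z * ∑ x ∈ Z, S x ≤ a Z * ∑ x ∈ Z, c * f x i' :=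
                mul_le_mul_of_nonneg_left (sum_le_sum fun x _ => hS x) (ha Z)
            _ = c * (a Z * ∑ x ∈ Z, f x i') := by rw [← mul_sum]; ring
        · simp
    _ = c * ∑ Z ∈ boundedSets k, if i ∈ Z then a Z * ∑ x ∈ Z, f x i' else 0 := by
        simp only [mul_sum, mul_ite, mul_zero]
    _ ≤ c * (lam * J * f i i') := mul_le_mul_of_nonneg_left
        ((sum_boundedSets_ite_le _ haF _).trans (sum_mem_mul_sum_le hJ hf hpair hconv i i')) hc

lemma seqSum_mem_mul_sum_succ_le (ha : ∀ Z, 0 ≤ a Z) (hg : 0 ≤ g) (hJ : 0 ≤ J)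
    (hf : ∀ x y, 0 ≤ f x y) (hsite : ∀ i, ∑ Z with i ∈ Z, a Z ≤ g)
    (hpair : ∀ x y, ∑ Z with x ∈ Z ∧ y ∈ Z, a Z ≤ J * f x y)
    (hconv : ∀ x y, ∑ z, f x z * f z y ≤ lam * f x y) (m : ℕ) (i i' : Λ) :
    seqSum a k (m + 1) (fun U => if i ∈ U then ∑ x ∈ U, f x i' else 0) ≤
      (((m + 1) * k : ℕ) * g + lam * J) *
          seqSum a k m (fun U => if i ∈ U then ∑ x ∈ U, f x i' else 0) +
        ∑ Z ∈ boundedSets k, (if i ∈ Z then a Z else 0) *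
          ∑ x ∈ Z, seqSum a k m (fun U => if x ∈ U then ∑ y ∈ U, f y i' else 0) +
        k * ((m + 1)! * g * (g * k) ^ m) * (lam * J * f i i') := by
  have hF : ∀ Z, 0 ≤ ∑ x ∈ Z, f x i' := fun Z => sum_nonneg fun x _ => hf x i'
  have haF : ∀ Z, 0 ≤ a Z * ∑ x ∈ Z, f x i' := fun Z => mul_nonneg (ha Z) (hF Z)
  calc seqSum a k (m + 1) (fun U => if i ∈ U then ∑ x ∈ U, f x i' else 0)
      ≤ seqSum a k m (fun U =>
          (((m + 1) * k : ℕ) * g + lam * J) * (if i ∈ U then ∑ x ∈ U, f x i' else 0) +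
          (∑ x ∈ U, f x i') * ∑ Z ∈ attachable k U, (if i ∈ Z then a Z else 0) +
          ∑ Z ∈ attachable k U, if i ∈ Z then a Z * ∑ x ∈ Z, f x i' else 0) := by
        rw [seqSum_succ]
        exact seqSum_mono ha fun U hU =>
          sum_attachable_mul_ite_mem_sum_union_le ha hg hJ hf hsite hpair hconv hU i i'
    _ ≤ _ := by
        rw [seqSum_add, seqSum_add, seqSum_const_mul]
        gcongr
        · exact seqSum_mul_sum_attachable_le ha m _ _ hF fun Z => by split_ifs <;> simp [ha Z]
        · refine (seqSum_sum_attachable_le ha _ (fun Z => by split_ifs <;> simp [haF Z])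
            (by positivity) (seqSum_mem_le ha hg hsite m)).trans ?_
          gcongr
          exact (sum_boundedSets_ite_le _ haF _).trans (sum_mem_mul_sum_le hJ hf hpair hconv i i')

theorem seqSum_mem_mul_sum_le (ha : ∀ Z, 0 ≤ a Z) (hg : 0 ≤ g) (hJ : 0 ≤ J) (hlam : 0 ≤ lam)
    (hf : ∀ x y, 0 ≤ f x y) (hsite : ∀ i, ∑ Z with i ∈ Z, a Z ≤ g)
    (hpair : ∀ x y, ∑ Z with x ∈ Z ∧ y ∈ Z, a Z ≤ J * f x y)
    (hconv : ∀ x y, ∑ z, f x z * f z y ≤ lam * f x y) {G : ℝ} (hgk : g * k ≤ G)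
    (hlJ : lam * J ≤ G) (m : ℕ) (i i' : Λ) :
    seqSum a k m (fun U => if i ∈ U then ∑ x ∈ U, f x i' else 0) ≤
      (m + 1) * (m + 1)! * G ^ m * (lam * J) * f i i' := by
  induction m generalizing i with
  | zero =>
    have haF : ∀ Z, 0 ≤ a Z * ∑ x ∈ Z, f x i' :=
      fun Z => mul_nonneg (ha Z) (sum_nonneg fun x _ => hf x i')
    simpa [seqSum_zero, mul_ite] using
      (sum_boundedSets_ite_le _ haF (i ∈ ·)).trans (sum_mem_mul_sum_le hJ hf hpair hconv i i')
  | succ m ih =>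
    have hG : 0 ≤ G := (by positivity : 0 ≤ g * k).trans hgk
    set b : ℝ := (m + 1) * (m + 1)! * G ^ m * (lam * J) with hb_def
    have hb : 0 ≤ b := by positivity
    have := hf i i'
    calc seqSum a k (m + 1) (fun U => if i ∈ U then ∑ x ∈ U, f x i' else 0)
        ≤ (((m + 1) * k : ℕ) * g + lam * J) * (b * f i i') +
            b * (lam * J * f i i') + k * ((m + 1)! * g * (g * k) ^ m) * (lam * J * f i i') := by
          refine (seqSum_mem_mul_sum_succ_le ha hg hJ hf hsite hpair hconv m i i').trans ?_
          gcongr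
          · exact ih i
          · exact sum_boundedSets_ite_mul_sum_le ha hJ hf hpair hconv hb ih
      _ ≤ ((m + 1) * G + G) * (b * f i i') + b * (G * f i i') +
            (m + 1)! * G ^ (m + 1) * (lam * J * f i i') := by
          gcongr ?_ * _ + b * (?_ * _) + ?_ * _
          · have := mul_le_mul_of_nonneg_left hgk (by positivity : (0 : ℝ) ≤ m + 1)
            push_cast
            linarith
          · exact natCast_mul_factorial_mul_pow_le hg hgk m
      _ = _ := by
          rw [hb_def]
          push_cast [Nat.factorial_succ]
          ring

lemma sum_attachable_mul_ite_mem_and_mem_union_le (ha : ∀ Z, 0 ≤ a Z) (hg : 0 ≤ g)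
    (hsite : ∀ i, ∑ Z with i ∈ Z, a Z ≤ g)
    (hpair : ∀ x y, ∑ Z with x ∈ Z ∧ y ∈ Z, a Z ≤ J * f x y)
    {n : ℕ} {U : Finset Λ} (hU : U.card ≤ n) (i i' : Λ) :
    ∑ Z ∈ attachable k U, a Z * (if i ∈ U ∪ Z ∧ i' ∈ U ∪ Z then 1 else 0) ≤
      n * g * (if i ∈ U ∧ i' ∈ U then 1 else 0) +
        J * (if i ∈ U then ∑ x ∈ U, f x i' else 0) +
        J * (if i' ∈ U then ∑ x ∈ U, f x i else 0) +
        ∑ Z ∈ attachable k U, if i ∈ Z ∧ i' ∈ Z then a Z else 0 := by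
  have hpair' : ∀ y, ∑ Z ∈ attachable k U, (if y ∈ Z then a Z else 0) ≤ J * ∑ x ∈ U, f x y :=
    fun y => by
      rw [mul_sum]
      refine sum_attachable_le U _ (fun Z => by split_ifs <;> simp [ha Z]) _ fun x => ?_
      rw [← sum_filter, filter_filter]
      exact hpair x y
  calc ∑ Z ∈ attachable k U, a Z * (if i ∈ U ∪ Z ∧ i' ∈ U ∪ Z then 1 else 0)
      ≤ ∑ Z ∈ attachable k U, ((if i ∈ U ∧ i' ∈ U then 1 else 0) * a Z +
          (if i ∈ U then 1 else 0) * (if i' ∈ Z then a Z else 0) +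
          (if i' ∈ U then 1 else 0) * (if i ∈ Z then a Z else 0) +
          if i ∈ Z ∧ i' ∈ Z then a Z else 0) := by
        refine sum_le_sum fun Z _ => ?_
        by_cases hiU : i ∈ U <;> by_cases hiZ : i ∈ Z <;> by_cases hi'U : i' ∈ U <;>
          by_cases hi'Z : i' ∈ Z <;> simp [hiU, hiZ, hi'U, hi'Z, ha Z, add_nonneg]
    _ ≤ _ := by
        simp only [sum_add_distrib, ← mul_sum]
        have hmass := sum_attachable_le_card_mul (k := k) ha hg hsite hU
        gcongr ?_ + ?_ + ?_ + _ <;> split_ifs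
        · simpa using hmass
        · simp
        · simpa using hpair' i'
        · simp
        · simpa using hpair' i
        · simp

lemma seqSum_mem_and_mem_succ_le (ha : ∀ Z, 0 ≤ a Z) (hg : 0 ≤ g)
    (hsite : ∀ i, ∑ Z with i ∈ Z, a Z ≤ g)
    (hpair : ∀ x y, ∑ Z with x ∈ Z ∧ y ∈ Z, a Z ≤ J * f x y) (m : ℕ) (i i' : Λ) :
    seqSum a k (m + 1) (fun U => if i ∈ U ∧ i' ∈ U then 1 else 0) ≤
      ((m + 1) * k : ℕ) * g * seqSum a k m (fun U => if i ∈ U ∧ i' ∈ U then 1 else 0) +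
        J * seqSum a k m (fun U => if i ∈ U then ∑ x ∈ U, f x i' else 0) +
        J * seqSum a k m (fun U => if i' ∈ U then ∑ x ∈ U, f x i else 0) +
        k * ((m + 1)! * g * (g * k) ^ m) * (J * f i i') := by
  calc seqSum a k (m + 1) (fun U => if i ∈ U ∧ i' ∈ U then 1 else 0)
      ≤ seqSum a k m (fun U =>
          ((m + 1) * k : ℕ) * g * (if i ∈ U ∧ i' ∈ U then 1 else 0) +
          J * (if i ∈ U then ∑ x ∈ U, f x i' else 0) +
          J * (if i' ∈ U then ∑ x ∈ U, f x i else 0) +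
          ∑ Z ∈ attachable k U, if i ∈ Z ∧ i' ∈ Z then a Z else 0) := by
        rw [seqSum_succ]
        exact seqSum_mono ha fun U hU =>
          sum_attachable_mul_ite_mem_and_mem_union_le ha hg hsite hpair hU i i'
    _ ≤ _ := by
        rw [seqSum_add, seqSum_add, seqSum_add, seqSum_const_mul, seqSum_const_mul,
          seqSum_const_mul]
        gcongr
        refine (seqSum_sum_attachable_le ha _ (fun Z => by split_ifs <;> simp [ha Z])
          (by positivity) (seqSum_mem_le ha hg hsite m)).trans ?_
        gcongr
        exact (sum_boundedSets_ite_le a ha fun Z => i ∈ Z ∧ i' ∈ Z).trans (hpair i i')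

theorem seqSum_mem_and_mem_le (ha : ∀ Z, 0 ≤ a Z) (hg : 0 ≤ g) (hJ : 0 ≤ J) (hlam : 1 ≤ lam)
    (hf : ∀ x y, 0 ≤ f x y) (hf_symm : ∀ x y, f x y = f y x)
    (hsite : ∀ i, ∑ Z with i ∈ Z, a Z ≤ g)
    (hpair : ∀ x y, ∑ Z with x ∈ Z ∧ y ∈ Z, a Z ≤ J * f x y)
    (hconv : ∀ x y, ∑ z, f x z * f z y ≤ lam * f x y) {G : ℝ} (hgk : g * k ≤ G)
    (hlJ : lam * J ≤ G) (m : ℕ) (i i' : Λ) :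
    seqSum a k m (fun U => if i ∈ U ∧ i' ∈ U then 1 else 0) ≤
      m ! * (m + 1) ^ 2 * G ^ (m + 1) * f i i' := by
  have hJG : J ≤ G := le_trans (by nlinarith) hlJ
  induction m with
  | zero =>
    simpa [seqSum_zero, mul_ite] using
      ((sum_boundedSets_ite_le a ha fun Z => i ∈ Z ∧ i' ∈ Z).trans (hpair i i')).trans
        (mul_le_mul_of_nonneg_right hJG (hf i i'))
  | succ m ih =>
    have hB := seqSum_mem_mul_sum_le ha hg hJ (by linarith) hf hsite hpair hconv hgk hlJ m
    have hG : 0 ≤ G := (by positivity : 0 ≤ g * k).trans hgk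
    have := hf i i'
    calc seqSum a k (m + 1) (fun U => if i ∈ U ∧ i' ∈ U then 1 else 0)
        ≤ ((m + 1) * k : ℕ) * g * (m ! * (m + 1) ^ 2 * G ^ (m + 1) * f i i') +
            J * ((m + 1) * (m + 1)! * G ^ m * (lam * J) * f i i') +
            J * ((m + 1) * (m + 1)! * G ^ m * (lam * J) * f i i') +
            k * ((m + 1)! * g * (g * k) ^ m) * (J * f i i') := by
          refine (seqSum_mem_and_mem_succ_le ha hg hsite hpair m i i').trans ?_
          gcongr
          · exact hB i i'
          · rw [hf_symm i i']; exact hB i' i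
      _ ≤ (m + 1) * G * (m ! * (m + 1) ^ 2 * G ^ (m + 1) * f i i') +
            G * ((m + 1) * (m + 1)! * G ^ m * G * f i i') +
            G * ((m + 1) * (m + 1)! * G ^ m * G * f i i') +
            (m + 1)! * G ^ (m + 1) * (G * f i i') := by
          gcongr ?_ * _ + ?_ * (_ * ?_ * _) + ?_ * (_ * ?_ * _) + ?_ * (?_ * _)
          · have := mul_le_mul_of_nonneg_left hgk (by positivity : (0 : ℝ) ≤ m + 1)
            push_cast
            linarith
          · exact natCast_mul_factorial_mul_pow_le hg hgk m
      _ = _ := by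
          push_cast [Nat.factorial_succ]
          ring

end Bounds

theorem two_point_string_sum_bound_general
    {Λ : Type} [Fintype Λ] [DecidableEq Λ] (d : Λ → Λ → ℕ)
    (hmet : IsLatticeMetric d) (k : ℕ) (α : ℝ)
    (J g lam : ℝ) (hJ : 0 < J) (hg : 0 ≤ g) (hlam : 1 ≤ lam)
    (a : Finset Λ → ℝ) (ha : ∀ Z, 0 ≤ a Z)
    (hpair : ∀ i i' : Λ,
      ∑ Z ∈ Finset.univ.filter (fun Z : Finset Λ => i ∈ Z ∧ i' ∈ Z), a Z
        ≤ J * ((d i i' : ℝ) + 1) ^ (-α))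
    (hsite : ∀ i : Λ,
      ∑ Z ∈ Finset.univ.filter (fun Z : Finset Λ => i ∈ Z), a Z ≤ g)
    (hlam₂ : ∀ i i' : Λ,
      ∑ i₀ : Λ, ((d i i₀ : ℝ) + 1) ^ (-α) * ((d i₀ i' : ℝ) + 1) ^ (-α)
        ≤ lam * ((d i i' : ℝ) + 1) ^ (-α))
    (m : ℕ) (i i' : Λ) :
    ∑ w ∈ Finset.univ.filter (fun w : Fin (m + 1) → Finset Λ =>
        (∀ j, (w j).Nonempty ∧ (w j).card ≤ k) ∧ SeqConnected w ∧
        i ∈ Finset.univ.biUnion w ∧ i' ∈ Finset.univ.biUnion w),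
      ∏ j, a (w j)
      ≤ (m.factorial : ℝ) * ((m : ℝ) + 1) ^ 2 * max (g * k) (lam * J) ^ (m + 1) *
          ((d i i' : ℝ) + 1) ^ (-α) := by
  rw [← seqSum_ite_mem_and_mem]
  exact seqSum_mem_and_mem_le ha hg hJ.le hlam (fun x y => by positivity)
    (fun x y => by rw [hmet.1 x y]) hsite hpair hlam₂ (le_max_left _ _) (le_max_right _ _) m i i'

/-- **Two-point string-sum bound** (Lemma 3 of the Supplement):
the sum over connected sequences `(Z₀,…,Z_m)` of subsets (nonempty, size ≤ k)
whose union contains both `i` and `i'`, of `∏_j a_{Z_j}`, is at most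
`m! (m+1)² g̃^{m+1} (d(i,i')+1)^{-α}` with `g̃ = max(gk, λJ)`. -/
theorem two_point_string_sum_bound
    {Λ : Type} [Fintype Λ] [DecidableEq Λ] (d : Λ → Λ → ℕ)
    (hmet : IsLatticeMetric d) (k : ℕ) (α D : ℝ) (hD : 0 < D) (hα : D < α)
    (J g lam : ℝ) (hJ : 0 < J) (hg : 0 ≤ g) (hlam : 1 ≤ lam)
    (a : Finset Λ → ℝ) (ha : ∀ Z, 0 ≤ a Z)
    (hpair : ∀ i i' : Λ,
      ∑ Z ∈ Finset.univ.filter (fun Z : Finset Λ => i ∈ Z ∧ i' ∈ Z), a Z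
        ≤ J * ((d i i' : ℝ) + 1) ^ (-α))
    (hsite : ∀ i : Λ,
      ∑ Z ∈ Finset.univ.filter (fun Z : Finset Λ => i ∈ Z), a Z ≤ g)
    (hlam₂ : ∀ i i' : Λ,
      ∑ i₀ : Λ, ((d i i₀ : ℝ) + 1) ^ (-α) * ((d i₀ i' : ℝ) + 1) ^ (-α)
        ≤ lam * ((d i i' : ℝ) + 1) ^ (-α))
    (m : ℕ) (i i' : Λ) :
    ∑ w ∈ Finset.univ.filter (fun w : Fin (m + 1) → Finset Λ =>
        (∀ j, (w j).Nonempty ∧ (w j).card ≤ k) ∧ SeqConnected w ∧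
        i ∈ Finset.univ.biUnion w ∧ i' ∈ Finset.univ.biUnion w),
      ∏ j, a (w j)
      ≤ (m.factorial : ℝ) * ((m : ℝ) + 1) ^ 2 * max (g * k) (lam * J) ^ (m + 1) *
          ((d i i' : ℝ) + 1) ^ (-α) :=
  two_point_string_sum_bound_general d hmet k α J g lam hJ hg hlam a ha hpair hsite hlam₂ m i i'
end

section
/- Decomposition of a connected Pauli string sequence (Lemma 4 of the Supplement). Let m ≥ 1 and let P₀, P₁, …, P_m be Pauli strings with supports Z₀, Z₁, …, Z_m satisfying Z_j ∩ (Z₀ ∪ ⋯ ∪ Z_{j−1}) ≠ ∅ for every 1 ≤ j ≤ m, and suppose the nested commutator C := ad_{P_m} ⋯ ad_{P_2} ad_{P_1}(P₀) is nonzero; let Λ_w := supp(C). Then there exists a partition {0, 1, …, m} = I₁ ⊔ I₂ into two nonempty sets such that: (1) for each part I ∈ {I₁, I₂}, the intersection graph on the index set I ∪ {0} (vertices j, with an edge between j and j' whenever Z_j ∩ Z_{j'} ≠ ∅) is connected, so every element of I is joined to Z₀ by a path through subsets indexed by I; and (2) Λ_w ∩ (⋃_{j∈I₁} Z_j) ≠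 ∅ and Λ_w ∩ (⋃_{j∈I₂} Z_j) ≠ ∅. -/
open scoped Classical ENNReal Matrix ComplexOrder
open Complex

/-- The nested commutator `ad_{P_m} ⋯ ad_{P_1}(P_0)`. -/
noncomputable def nestedComm {n : Type} [Fintype n] [DecidableEq n]
    (P : ℕ → Matrix n n ℂ) : ℕ → Matrix n n ℂ
  | 0 => P 0
  | m + 1 => commM (P (m + 1)) (nestedComm P m)

/-!
Site by site `σᵃσᵇ = ω(a,b) σ^(a ^^^ b)`, so the nested commutator is a multiple `c_m P_{q_m}` of
one Pauli string, with `q_{n+1} = p_{n+1} ^^^ q_n` and `c_{n+1} = (∏ᵢ ω(p_{n+1} i, q_n i) -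
∏ᵢ ω(q_n i, p_{n+1} i)) c_n`, and `Λ_w` is the support `S_m` of `q_m`. If `C ≠ 0`, every factor
is nonzero, which needs a site where `p_{n+1}` and `q_n` carry distinct nontrivial Paulis; that
site lies in `Z_{n+1}`, in `S_n` (hence in some `Z_k`, `k ≤ n`) and in `S_{n+1}`.
The partition is grown along `n`, starting from `{0}, {1}`: `n+1` joins the part containing `k`,
unless `S_{n+1}` would then miss the other part. In that case a site of `S_n` in the other part
was lost, so it lies in `Z_{n+1}`, and `n+1` joins the other part instead.
-/

section PauliAlgebra

def pauliPhase (a b : Fin 4) : ℂ :=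
  !![1, 1, 1, 1; 1, 1, I, -I; 1, -I, 1, I; 1, I, -I, 1] a b

lemma pauli_mul_pauli (a b : Fin 4) : pauli a * pauli b = pauliPhase a b • pauli (a ^^^ b) := by
  fin_cases a <;> fin_cases b <;> ext i j <;> fin_cases i <;> fin_cases j <;>
    simp [pauli, pauliPhase, Matrix.mul_apply, Fin.sum_univ_two]

lemma pauliPhase_symm {a b : Fin 4} (h : a = 0 ∨ b = 0 ∨ a = b) :
    pauliPhase a b = pauliPhase b a := by
  fin_cases a <;> fin_cases b <;> simp_all [pauliPhase]

lemma pauli_zero_apply (s t : Fin 2) : pauli 0 s t = if s = t then 1 else 0 := by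
  fin_cases s <;> fin_cases t <;> simp [pauli]

lemma pauli_apply_zero_ne_zero (a : Fin 4) : pauli a 0 (if a = 1 ∨ a = 2 then 1 else 0) ≠ 0 := by
  fin_cases a <;> simp [pauli]

end PauliAlgebra

lemma commM_smul_right {n : Type} [Fintype n] [DecidableEq n] (A B : Matrix n n ℂ) (c : ℂ) :
    commM A (c • B) = c • commM A B := by
  simp only [commM, Matrix.mul_smul, Matrix.smul_mul, smul_sub]

section PauliStrings

variable {Λ : Type} [Fintype Λ]

def pauliSupport (q : Λ → Fin 4) : Finset Λ := Finset.univ.filter (fun i => q i ≠ 0)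

@[simp]
lemma mem_pauliSupport {q : Λ → Fin 4} {i : Λ} : i ∈ pauliSupport q ↔ q i ≠ 0 := by
  simp [pauliSupport]

def commPhase (p q : Λ → Fin 4) : ℂ :=
  ∏ i, pauliPhase (p i) (q i) - ∏ i, pauliPhase (q i) (p i)

lemma exists_anticommuting_site {p q : Λ → Fin 4} (h : commPhase p q ≠ 0) :
    ∃ i, p i ≠ 0 ∧ q i ≠ 0 ∧ p i ≠ q i := by
  by_contra! hcomm
  refine h (sub_eq_zero.2 (Finset.prod_congr rfl fun i _ => pauliPhase_symm ?_))
  tauto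

def nestedPauli (p : ℕ → Λ → Fin 4) : ℕ → Λ → Fin 4
  | 0 => p 0
  | n + 1 => fun i => p (n + 1) i ^^^ nestedPauli p n i

noncomputable def nestedPhase (p : ℕ → Λ → Fin 4) : ℕ → ℂ
  | 0 => 1
  | n + 1 => commPhase (p (n + 1)) (nestedPauli p n) * nestedPhase p n

lemma nestedPhase_ne_zero_of_le {p : ℕ → Λ → Fin 4} {n m : ℕ} (hnm : n ≤ m)
    (h : nestedPhase p m ≠ 0) : nestedPhase p n ≠ 0 := by
  induction m, hnm using Nat.le_induction with
  | base => exact h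
  | succ m _ ih => exact ih (right_ne_zero_of_mul h)

lemma exists_le_of_mem_pauliSupport_nestedPauli (p : ℕ → Λ → Fin 4) (n : ℕ) (i : Λ)
    (hi : i ∈ pauliSupport (nestedPauli p n)) : ∃ k ≤ n, i ∈ pauliSupport (p k) := by
  induction n with
  | zero => exact ⟨0, le_rfl, hi⟩
  | succ n ih =>
    by_cases hp : p (n + 1) i = 0
    · obtain ⟨k, hk, hik⟩ := ih (by simpa [nestedPauli, hp, Fin.xor_comm 0] using hi)
      exact ⟨k, by omega, hik⟩
    · exact ⟨n + 1, le_rfl, mem_pauliSupport.2 hp⟩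

variable [DecidableEq Λ]

lemma pauliString_mul_pauliString (p q : Λ → Fin 4) :
    pauliString p * pauliString q =
      (∏ i, pauliPhase (p i) (q i)) • pauliString (fun i => p i ^^^ q i) := by
  ext a b
  simp only [Matrix.mul_apply, pauliString, Matrix.smul_apply, smul_eq_mul,
    ← Finset.prod_mul_distrib]
  rw [← Fintype.prod_sum (fun i s => pauli (p i) (a i) s * pauli (q i) s (b i))]
  simp only [← Matrix.mul_apply, pauli_mul_pauli, Matrix.smul_apply, smul_eq_mul]

lemma commM_pauliString (p q : Λ → Fin 4) :
    commM (pauliString p) (pauliString q) =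
      commPhase p q • pauliString (fun i => p i ^^^ q i) := by
  simp only [commM, pauliString_mul_pauliString, Fin.xor_comm (q _), commPhase, sub_smul]

lemma nestedComm_pauliString (p : ℕ → Λ → Fin 4) (m : ℕ) :
    nestedComm (fun j => pauliString (p j)) m =
      nestedPhase p m • pauliString (nestedPauli p m) := by
  induction m with
  | zero => simp [nestedComm, nestedPhase, nestedPauli]
  | succ n ih =>
    rw [nestedComm, ih, commM_smul_right, commM_pauliString, smul_smul, nestedPhase, nestedPauli,
      mul_comm]

lemma pauliSupport_nestedPauli_subset_succ (p : ℕ → Λ → Fin 4) (n : ℕ) :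
    pauliSupport (nestedPauli p n) ⊆
      pauliSupport (nestedPauli p (n + 1)) ∪ pauliSupport (p (n + 1)) := by
  intro i hi
  by_cases hp : p (n + 1) i = 0
  · exact Finset.mem_union_left _ (by simpa [nestedPauli, hp, Fin.xor_comm 0] using hi)
  · exact Finset.mem_union_right _ (mem_pauliSupport.2 hp)

lemma exists_mem_pauliSupport_of_nestedPhase_succ_ne_zero {p : ℕ → Λ → Fin 4} {n : ℕ}
    (h : nestedPhase p (n + 1) ≠ 0) :
    (pauliSupport (p (n + 1)) ∩ pauliSupport (nestedPauli p n) ∩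
      pauliSupport (nestedPauli p (n + 1))).Nonempty := by
  obtain ⟨i, hp, hq, hpq⟩ := exists_anticommuting_site (left_ne_zero_of_mul h)
  have hxor : p (n + 1) i ^^^ nestedPauli p n i ≠ 0 := by
    generalize p (n + 1) i = a at hpq
    generalize nestedPauli p n i = b at hpq
    revert a b
    decide
  exact ⟨i, by simp [nestedPauli, hp, hq, hxor]⟩

end PauliStrings

section Support

variable {Λ : Type} [Fintype Λ] [DecidableEq Λ]

lemma IsSupportedOn.smul {A : SpinOp Λ} {X : Finset Λ} (h : IsSupportedOn A X) (c : ℂ) :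
    IsSupportedOn (c • A) X :=
  ⟨fun a b hab => by simp [h.1 a b hab],
    fun a b a' b' ha hb hab hab' => by simp [h.2 a b a' b' ha hb hab hab']⟩

lemma isSupportedOn_pauliString (q : Λ → Fin 4) :
    IsSupportedOn (pauliString q) (pauliSupport q) := by
  have hq : ∀ i ∉ pauliSupport q, q i = 0 := fun i hi => by simpa using hi
  constructor
  · rintro a b ⟨i, hi, hab⟩
    exact Finset.prod_eq_zero (Finset.mem_univ i) (by rw [hq i hi, pauli_zero_apply, if_neg hab])
  · intro a b a' b' ha hb hab hab'
    refine Finset.prod_congr rfl fun i _ => ?_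
    by_cases hi : i ∈ pauliSupport q
    · rw [ha i hi, hb i hi]
    · rw [hq i hi, pauli_zero_apply, pauli_zero_apply, if_pos (hab i hi), if_pos (hab' i hi)]

lemma pauliString_update_mul (q : Λ → Fin 4) (a b : SpinConf Λ) (i : Λ) (s t : Fin 2) :
    pauliString q (Function.update a i s) (Function.update b i t) * pauli (q i) (a i) (b i) =
      pauliString q a b * pauli (q i) s t := by
  simp only [pauliString, ← Finset.mul_prod_erase Finset.univ _ (Finset.mem_univ i),
    Function.update_self]
  rw [Finset.prod_congr rfl fun j hj => by
    rw [Function.update_of_ne (Finset.ne_of_mem_erase hj),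
      Function.update_of_ne (Finset.ne_of_mem_erase hj)]]
  ring

lemma pauliSupport_subset_of_isSupportedOn {c : ℂ} (hc : c ≠ 0) {q : Λ → Fin 4} {S : Finset Λ}
    (h : IsSupportedOn (c • pauliString q) S) : pauliSupport q ⊆ S := by
  set τ : SpinConf Λ := fun i => if q i = 1 ∨ q i = 2 then 1 else 0
  have hentry : c * pauliString q 0 τ ≠ 0 :=
    mul_ne_zero hc (Finset.prod_ne_zero_iff.2 fun i _ => pauli_apply_zero_ne_zero (q i))
  -- row `0` of `P_q` is nonzero exactly in column `τ`, which differs from `0` at the sites of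
  -- `σˣ, σʸ`; these must therefore lie in `S`
  have hdiag : ∀ j ∉ S, τ j = 0 := fun j hj => by
    by_contra hτ
    exact hentry (h.1 0 τ ⟨j, hj, Ne.symm hτ⟩)
  intro i hi
  by_contra hiS
  have hqi : q i = 3 := by
    have hxy : ¬(q i = 1 ∨ q i = 2) := fun hxy => by simpa [τ, hxy] using hdiag i hiS
    have : ∀ x : Fin 4, x ≠ 0 → ¬(x = 1 ∨ x = 2) → x = 3 := by decide
    exact this _ (mem_pauliSupport.1 hi) hxy
  have hne : ∀ j ∈ S, j ≠ i := fun j hj hji => hiS (hji ▸ hj)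
  -- flipping the spin at `i` on both sides multiplies the entry by `σᶻ₁₁ / σᶻ₀₀ = -1`,
  -- while support on `S ∌ i` leaves it unchanged
  have hsame := h.2 (Function.update 0 i 1) (Function.update τ i 1) 0 τ
    (fun j hj => Function.update_of_ne (hne j hj) _ _)
    (fun j hj => Function.update_of_ne (hne j hj) _ _)
    (fun j hj => by
      by_cases hji : j = i
      · simp [hji]
      · simp [Function.update_of_ne hji, hdiag j hj])
    (fun j hj => (hdiag j hj).symm)
  have hflip := pauliString_update_mul q 0 τ i 1 1
  simp only [Matrix.smul_apply, smul_eq_mul] at hsame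
  rw [Pi.zero_apply, hdiag i hiS, hqi] at hflip
  simp [pauli] at hflip
  exact hentry (by linear_combination (c / 2) * hflip - hsame / 2)

end Support

section Splitting

variable {Λ : Type} [DecidableEq Λ]

def JoinedToZero (Z : ℕ → Finset Λ) (I : Finset ℕ) (j : ℕ) : Prop :=
  ∃ (l : ℕ) (seq : ℕ → ℕ), seq 0 = j ∧ seq l = 0 ∧ (∀ b : ℕ, b ≤ l → seq b ∈ insert 0 I) ∧
    (∀ b : ℕ, b < l → (Z (seq b) ∩ Z (seq (b + 1))).Nonempty)

lemma joinedToZero_zero (Z : ℕ → Finset Λ) (I : Finset ℕ) : JoinedToZero Z I 0 :=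
  ⟨0, fun _ => 0, rfl, rfl, fun _ _ => Finset.mem_insert_self 0 I, fun _ h => absurd h (by omega)⟩

lemma JoinedToZero.mono {Z : ℕ → Finset Λ} {I J : Finset ℕ} {j : ℕ} (hIJ : I ⊆ J)
    (h : JoinedToZero Z I j) : JoinedToZero Z J j :=
  let ⟨l, seq, h0, hl, hmem, hedge⟩ := h
  ⟨l, seq, h0, hl, fun b hb => Finset.insert_subset_insert 0 hIJ (hmem b hb), hedge⟩

lemma JoinedToZero.cons {Z : ℕ → Finset Λ} {I : Finset ℕ} {n r : ℕ} (hr : JoinedToZero Z I r)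
    (hn : n ∈ insert 0 I) (hedge : (Z n ∩ Z r).Nonempty) : JoinedToZero Z I n := by
  obtain ⟨l, seq, h0, hl, hmem, hedges⟩ := hr
  refine ⟨l + 1, fun b => Nat.casesOn b n seq, rfl, hl, ?_, ?_⟩
  · rintro (_ | b) hb
    exacts [hn, hmem b (by omega)]
  · rintro (_ | b) hb
    · simpa [h0] using hedge
    · exact hedges b (by omega)

lemma joinedToZero_insert {Z : ℕ → Finset Λ} {I : Finset ℕ} {n r : ℕ}
    (hI : ∀ j ∈ I, JoinedToZero Z I j) (hr : r ∈ I) (hedge : (Z n ∩ Z r).Nonempty) :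
    ∀ j ∈ insert n I, JoinedToZero Z (insert n I) j := by
  have hsub : I ⊆ insert n I := Finset.subset_insert n I
  intro j hj
  rcases Finset.mem_insert.1 hj with rfl | hj
  · exact ((hI r hr).mono hsub).cons (by simp) hedge
  · exact (hI j hj).mono hsub

structure IsSplitting (Z : ℕ → Finset Λ) (S : Finset Λ) (m : ℕ) (I₁ I₂ : Finset ℕ) : Prop where
  nonempty_left : I₁.Nonempty
  nonempty_right : I₂.Nonempty
  disjoint : Disjoint I₁ I₂
  union_eq : I₁ ∪ I₂ = Finset.range (m + 1)
  joined_left : ∀ j ∈ I₁, JoinedToZero Z I₁ j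
  joined_right : ∀ j ∈ I₂, JoinedToZero Z I₂ j
  meets_left : (S ∩ I₁.biUnion Z).Nonempty
  meets_right : (S ∩ I₂.biUnion Z).Nonempty

variable {Z : ℕ → Finset Λ}

lemma IsSplitting.symm {S : Finset Λ} {m : ℕ} {I₁ I₂ : Finset ℕ} (h : IsSplitting Z S m I₁ I₂) :
    IsSplitting Z S m I₂ I₁ :=
  ⟨h.nonempty_right, h.nonempty_left, h.disjoint.symm, by rw [Finset.union_comm, h.union_eq],
    h.joined_right, h.joined_left, h.meets_right, h.meets_left⟩

lemma isSplitting_one {S : Finset Λ} {i : Λ} (h₀ : i ∈ Z 0) (h₁ : i ∈ Z 1) (hS : i ∈ S) :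
    IsSplitting Z S 1 {0} {1} where
  nonempty_left := Finset.singleton_nonempty 0
  nonempty_right := Finset.singleton_nonempty 1
  disjoint := by decide
  union_eq := by decide
  joined_left j hj := Finset.mem_singleton.1 hj ▸ joinedToZero_zero Z {0}
  joined_right j hj := Finset.mem_singleton.1 hj ▸
    (joinedToZero_zero Z {1}).cons (by simp) ⟨i, Finset.mem_inter.2 ⟨h₁, h₀⟩⟩
  meets_left := ⟨i, by simp [hS, h₀]⟩
  meets_right := ⟨i, by simp [hS, h₁]⟩

lemma IsSplitting.insert_left {S S' : Finset Λ} {m : ℕ} {I₁ I₂ : Finset ℕ}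
    (h : IsSplitting Z S m I₁ I₂) {r : ℕ} (hr : r ∈ I₁) (hedge : (Z (m + 1) ∩ Z r).Nonempty)
    (hmeet₁ : (S' ∩ (insert (m + 1) I₁).biUnion Z).Nonempty)
    (hmeet₂ : (S' ∩ I₂.biUnion Z).Nonempty) :
    IsSplitting Z S' (m + 1) (insert (m + 1) I₁) I₂ where
  nonempty_left := Finset.insert_nonempty _ _
  nonempty_right := h.nonempty_right
  disjoint := Finset.disjoint_insert_left.2
    ⟨fun h' => by simpa [h.union_eq] using Finset.mem_union_right I₁ h', h.disjoint⟩
  union_eq := by rw [Finset.insert_union, h.union_eq, ← Finset.range_add_one]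
  joined_left := joinedToZero_insert h.joined_left hr hedge
  joined_right := h.joined_right
  meets_left := hmeet₁
  meets_right := hmeet₂

lemma IsSplitting.exists_succ {S S' : Finset Λ} {m : ℕ} {I₁ I₂ : Finset ℕ}
    (h : IsSplitting Z S m I₁ I₂) (hlost : S ⊆ S' ∪ Z (m + 1)) {i : Λ} {k : ℕ} (hk : k ∈ I₁)
    (hik : i ∈ Z k) (hi : i ∈ Z (m + 1)) (hiS' : i ∈ S') :
    ∃ J₁ J₂, IsSplitting Z S' (m + 1) J₁ J₂ := by
  by_cases hmeet₂ : (S' ∩ I₂.biUnion Z).Nonempty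
  · exact ⟨_, _, h.insert_left hk ⟨i, by simp [hi, hik]⟩ ⟨i, by simp [hiS', hi]⟩ hmeet₂⟩
  · -- the site of `S` in the second part is lost in `S'`, so it lies in `Z (m + 1)`
    obtain ⟨w, hw⟩ := h.meets_right
    simp only [Finset.mem_inter, Finset.mem_biUnion] at hw
    obtain ⟨hwS, r, hr, hwr⟩ := hw
    have hw' : w ∈ Z (m + 1) := (Finset.mem_union.1 (hlost hwS)).resolve_left fun hwS' =>
      hmeet₂ ⟨w, Finset.mem_inter.2 ⟨hwS', Finset.mem_biUnion.2 ⟨r, hr, hwr⟩⟩⟩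
    exact ⟨_, _, (h.symm.insert_left hr ⟨w, by simp [hw', hwr]⟩ ⟨i, by simp [hiS', hi]⟩
      ⟨i, Finset.mem_inter.2 ⟨hiS', Finset.mem_biUnion.2 ⟨k, hk, hik⟩⟩⟩).symm⟩

theorem exists_isSplitting {S : ℕ → Finset Λ} (hS : ∀ n, ∀ i ∈ S n, ∃ k ≤ n, i ∈ Z k)
    (hlost : ∀ n, S n ⊆ S (n + 1) ∪ Z (n + 1)) {m : ℕ} (hm : 1 ≤ m)
    (hwit : ∀ n < m, (Z (n + 1) ∩ S n ∩ S (n + 1)).Nonempty) :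
    ∃ I₁ I₂, IsSplitting Z (S m) m I₁ I₂ := by
  induction m, hm using Nat.le_induction with
  | base =>
    obtain ⟨i, hi⟩ := hwit 0 one_pos
    simp only [Finset.mem_inter] at hi
    obtain ⟨k, hk, hik⟩ := hS 0 i hi.1.2
    obtain rfl : k = 0 := by omega
    exact ⟨_, _, isSplitting_one hik hi.1.1 hi.2⟩
  | succ m _ ih =>
    obtain ⟨I₁, I₂, h⟩ := ih fun n hn => hwit n (by omega)
    obtain ⟨i, hi⟩ := hwit m (by omega)
    simp only [Finset.mem_inter] at hi
    obtain ⟨k, hkm, hik⟩ := hS m i hi.1.2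
    have hk : k ∈ I₁ ∪ I₂ := h.union_eq ▸ Finset.mem_range.2 (by omega)
    rcases Finset.mem_union.1 hk with hk | hk
    · exact h.exists_succ (hlost m) hk hik hi.1.1 hi.2
    · exact h.symm.exists_succ (hlost m) hk hik hi.1.1 hi.2

end Splitting

theorem pauli_string_decomposition_general
    {Λ : Type} [Fintype Λ] [DecidableEq Λ]
    (m : ℕ) (hm : 1 ≤ m) (p : ℕ → Λ → Fin 4)
    (Z : ℕ → Finset Λ)
    (hZ : ∀ j, Z j = Finset.univ.filter (fun i : Λ => p j i ≠ 0))
    (C : SpinOp Λ) (hC : C = nestedComm (fun j => pauliString (p j)) m)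
    (hC0 : C ≠ 0)
    (Λw : Finset Λ) (hΛw : IsSupportedOn C Λw)
    (hmin : ∀ S : Finset Λ, IsSupportedOn C S → Λw ⊆ S) :
    ∃ I₁ I₂ : Finset ℕ, I₁.Nonempty ∧ I₂.Nonempty ∧ Disjoint I₁ I₂ ∧
      I₁ ∪ I₂ = Finset.range (m + 1) ∧
      (∀ I ∈ ([I₁, I₂] : List (Finset ℕ)), ∀ j ∈ I,
        ∃ (l : ℕ) (seq : ℕ → ℕ), seq 0 = j ∧ seq l = 0 ∧
          (∀ b : ℕ, b ≤ l → seq b ∈ insert 0 I) ∧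
          (∀ b : ℕ, b < l → (Z (seq b) ∩ Z (seq (b + 1))).Nonempty)) ∧
      (Λw ∩ I₁.biUnion Z).Nonempty ∧ (Λw ∩ I₂.biUnion Z).Nonempty := by
  obtain rfl : Z = fun j => pauliSupport (p j) := funext hZ
  rw [nestedComm_pauliString] at hC
  subst hC
  have hc : nestedPhase p m ≠ 0 := fun h0 => hC0 (by rw [h0, zero_smul])
  obtain rfl : Λw = pauliSupport (nestedPauli p m) :=
    (hmin _ ((isSupportedOn_pauliString _).smul _)).antisymm
      (pauliSupport_subset_of_isSupportedOn hc hΛw)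
  obtain ⟨I₁, I₂, h⟩ := exists_isSplitting (exists_le_of_mem_pauliSupport_nestedPauli p)
    (pauliSupport_nestedPauli_subset_succ p) hm
    fun n hn =>
      exists_mem_pauliSupport_of_nestedPhase_succ_ne_zero (nestedPhase_ne_zero_of_le hn hc)
  refine ⟨I₁, I₂, h.nonempty_left, h.nonempty_right, h.disjoint, h.union_eq, ?_, h.meets_left,
    h.meets_right⟩
  intro I hI
  rcases List.mem_pair.1 hI with rfl | rfl
  exacts [h.joined_left, h.joined_right]

/-- **Decomposition of a connected Pauli string sequence**
(Lemma 4 of the Supplement): if the nested commutator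
`C = ad_{P_m}⋯ad_{P_1}(P₀)` of a connected sequence of Pauli strings is nonzero,
then the index set `{0,…,m}` can be partitioned into two nonempty parts `I₁, I₂`,
each connected to `Z₀` through intersecting supports, and the (minimal) support
`Λ_w` of `C` intersects the union of the supports of each part. -/
theorem pauli_string_decomposition
    {Λ : Type} [Fintype Λ] [DecidableEq Λ]
    (m : ℕ) (hm : 1 ≤ m) (p : ℕ → Λ → Fin 4)
    (Z : ℕ → Finset Λ)
    (hZ : ∀ j, Z j = Finset.univ.filter (fun i : Λ => p j i ≠ 0))
    (hconn : ∀ j : ℕ, 1 ≤ j → j ≤ m → (Z j ∩ (Finset.range j).biUnion Z).Nonempty)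
    (C : SpinOp Λ) (hC : C = nestedComm (fun j => pauliString (p j)) m)
    (hC0 : C ≠ 0)
    (Λw : Finset Λ) (hΛw : IsSupportedOn C Λw)
    (hmin : ∀ S : Finset Λ, IsSupportedOn C S → Λw ⊆ S) :
    ∃ I₁ I₂ : Finset ℕ, I₁.Nonempty ∧ I₂.Nonempty ∧ Disjoint I₁ I₂ ∧
      I₁ ∪ I₂ = Finset.range (m + 1) ∧
      (∀ I ∈ ([I₁, I₂] : List (Finset ℕ)), ∀ j ∈ I,
        ∃ (l : ℕ) (seq : ℕ → ℕ), seq 0 = j ∧ seq l = 0 ∧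
          (∀ b : ℕ, b ≤ l → seq b ∈ insert 0 I) ∧
          (∀ b : ℕ, b < l → (Z (seq b) ∩ Z (seq (b + 1))).Nonempty)) ∧
      (Λw ∩ I₁.biUnion Z).Nonempty ∧ (Λw ∩ I₂.biUnion Z).Nonempty :=
  pauli_string_decomposition_general m hm p Z hZ C hC hC0 Λw hΛw hmin
end
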